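/- arXiv:2402.10314 — 8 statements merged into one kernel-verified Lean document; each statement's English description precedes it below -/
import Mathlib

section
/- Let μ be a Borel measure on ℝ^n that is F-concave on a class 𝒞 of convex sets, with the property that for every K, L ∈ 𝒞 the mixed measures μ(K;L), μ(K;K) and μ(K;L,L) exist and are finite. If F is twice differentiable at x = μ(K) and F′(μ(K)) ≠ 0, then −(F″(μ(K))/F′(μ(K))) · μ(K;L)² ≥ μ(K;L,L). -/
open MeasureTheory Set Filter Topology Pointwise

noncomputable section

/-- The mixed measure `μ(K;L) = lim_{ε→0⁺} (μ(K+εL) − μ(K))/ε` exists and equals `m`. -/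
def HasMixedMeasure {n : ℕ} (μ : Measure (EuclideanSpace ℝ (Fin n)))
    (K L : Set (EuclideanSpace ℝ (Fin n))) (m : ℝ) : Prop :=
  Tendsto (fun ε : ℝ => ((μ (K + ε • L)).toReal - (μ K).toReal) / ε) (𝓝[>] 0) (𝓝 m)

/-- The mixed measure `μ(K;L,L) = d²/ds² μ(K+sL)` at `s = 0` (one-sided) exists and
equals `m`: there is a first (one-sided) derivative function `g` of `s ↦ μ(K+sL)` on
`[0,∞)` whose (one-sided) derivative at `0` is `m`. -/
def HasMixedMeasureSecond {n : ℕ} (μ : Measure (EuclideanSpace ℝ (Fin n)))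
    (K L : Set (EuclideanSpace ℝ (Fin n))) (m : ℝ) : Prop :=
  ∃ g : ℝ → ℝ,
    (∀ s ∈ Ici (0:ℝ),
      HasDerivWithinAt (fun u : ℝ => (μ (K + u • L)).toReal) (g s) (Ici 0) s) ∧
    HasDerivWithinAt g m (Ici 0) 0

/-- A class of sets: closed under Minkowski sums and nonnegative dilations. -/
def IsMinkowskiClass {n : ℕ} (𝒞 : Set (Set (EuclideanSpace ℝ (Fin n)))) : Prop :=
  ∀ K ∈ 𝒞, ∀ L ∈ 𝒞, ∀ s t : ℝ, 0 ≤ s → 0 ≤ t → s • K + t • L ∈ 𝒞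

/-- `μ` is `F`-concave on the class `𝒞`. -/
def IsFConcave {n : ℕ} (μ : Measure (EuclideanSpace ℝ (Fin n))) (F : ℝ → ℝ)
    (𝒞 : Set (Set (EuclideanSpace ℝ (Fin n)))) : Prop :=
  ContinuousOn F {x : ℝ | 0 < x ∧ ENNReal.ofReal x ≤ μ univ} ∧
  (StrictMonoOn F {x : ℝ | 0 < x ∧ ENNReal.ofReal x ≤ μ univ} ∨
    StrictAntiOn F {x : ℝ | 0 < x ∧ ENNReal.ofReal x ≤ μ univ}) ∧
  (∀ K ∈ 𝒞, ∀ L ∈ 𝒞, ∀ t ∈ Icc (0:ℝ) 1, 0 < μ K → 0 < μ L → μ K ≠ ⊤ → μ L ≠ ⊤ →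
    ∀ y : ℝ, 0 < y → ENNReal.ofReal y ≤ μ univ →
      F y = (1 - t) * F (μ K).toReal + t * F (μ L).toReal →
      y ≤ (μ ((1 - t) • K + t • L)).toReal)

/-!
Put `f s = μ(K + s • L)`. For convex `K` and `L`,
`(1 - θ) • (K + s • L) + θ • (K + t • L) = K + ((1 - θ) s + θ t) • L`, so `F`-concavity of `μ`
(with `F` increasing, after replacing `F` by `-F`) makes `F ∘ f` concave wherever `f > 0`.
The derivative `(F' ∘ f) · f'` of a concave function is antitone, so its right derivative
`F''(f 0) f'(0)² + F'(f 0) f''(0)` at `0` is nonpositive, while `F'(f 0) > 0` since `F` is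
increasing; dividing by `F'(f 0)` gives the inequality. If instead `f` has zeros accumulating at
`0⁺`, these are minima of `f ≥ 0`, which forces `μ(K;L) = μ(K;L,L) = 0`.
-/

theorem HasDerivWithinAt.tendsto_slope_nhdsGT {f : ℝ → ℝ} {f' x : ℝ}
    (hf : HasDerivWithinAt f f' (Ici x) x) : Tendsto (slope f x) (𝓝[>] x) (𝓝 f') :=
  (hasDerivWithinAt_iff_tendsto_slope' (lt_irrefl x)).mp (hasDerivWithinAt_Ioi_iff_Ici.mpr hf)

theorem accPt_Ioc_of_mem_Icc {a b x : ℝ} (hab : a < b) (hx : x ∈ Icc a b) :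
    AccPt x (𝓟 (Ioc a b)) :=
  uniqueDiffWithinAt_iff_accPt.mp <|
    uniqueDiffWithinAt_convex (convex_Ioc a b) (by simp [hab]) (by rwa [closure_Ioc hab.ne])

theorem ConcaveOn.antitoneOn_of_hasDerivWithinAt {S : Set ℝ} {f f' : ℝ → ℝ}
    (hconc : ConcaveOn ℝ S f) (hf : ∀ x ∈ S, HasDerivWithinAt f (f' x) S x) :
    AntitoneOn f' S := by
  intro x hx y hy hxy
  rcases hxy.eq_or_lt with rfl | hxy
  · rfl
  exact (hconc.le_slope_of_hasDerivWithinAt hx hy hxy (hf y hy)).trans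
    (hconc.slope_le_of_hasDerivWithinAt hx hy hxy (hf x hx))

theorem ConcaveOn.comp_secondDeriv_nonpos {f f' F F' : ℝ → ℝ} {f'' F'' δ : ℝ} (hδ : 0 < δ)
    (hconc : ConcaveOn ℝ (Ioc 0 δ) (F ∘ f))
    (hf : ∀ s ∈ Ici (0 : ℝ), HasDerivWithinAt f (f' s) (Ici 0) s)
    (hf' : HasDerivWithinAt f' f'' (Ici 0) 0)
    (hF : ∀ s ∈ Ioc 0 δ, HasDerivAt F (F' (f s)) (f s))
    (hF' : HasDerivAt F' F'' (f 0)) :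
    F'' * f' 0 ^ 2 + F' (f 0) * f'' ≤ 0 := by
  have hsub : Ioc 0 δ ⊆ Ici 0 := Ioc_subset_Ioi_self.trans Ioi_subset_Ici_self
  have hderiv : ∀ s ∈ Ioc 0 δ, HasDerivWithinAt (F ∘ f) (F' (f s) * f' s) (Ioc 0 δ) s :=
    fun s hs => (hF s hs).comp_hasDerivWithinAt s ((hf s hs.1.le).mono hsub)
  have hderiv₀ : HasDerivWithinAt (fun s => F' (f s) * f' s)
      (F'' * f' 0 * f' 0 + F' (f 0) * f'') (Ici 0) 0 :=
    (hF'.comp_hasDerivWithinAt 0 (hf 0 self_mem_Ici)).mul hf'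
  have := (hderiv₀.mono hsub).nonpos_of_antitoneOn
    (accPt_Ioc_of_mem_Icc hδ ⟨le_rfl, hδ.le⟩) (hconc.antitoneOn_of_hasDerivWithinAt hderiv)
  linarith

theorem eq_zero_of_tendsto_div_of_frequently_eq_zero {f : ℝ → ℝ} {c m : ℝ}
    (hm : Tendsto (fun ε => (f ε - c) / ε) (𝓝[>] 0) (𝓝 m))
    (hz : ∃ᶠ ε in 𝓝[>] 0, f ε = 0) : m = 0 := by
  have hc : c = 0 := by
    have hdiff : Tendsto (fun ε => f ε - c) (𝓝[>] 0) (𝓝 0) := by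
      have := hm.mul (tendsto_nhdsWithin_of_tendsto_nhds (tendsto_id (x := 𝓝 (0 : ℝ))))
      rw [mul_zero] at this
      refine this.congr' ?_
      filter_upwards [self_mem_nhdsWithin] with ε hε using div_mul_cancel₀ _ (ne_of_gt hε)
    have := tendsto_nhds_unique_of_frequently_eq hdiff (tendsto_const_nhds (x := -c))
      (hz.mono fun ε hε => by rw [hε, zero_sub])
    linarith
  subst hc
  exact tendsto_nhds_unique_of_frequently_eq hm tendsto_const_nhds
    (hz.mono fun ε hε => by rw [hε, sub_zero, zero_div])

theorem eq_zero_of_frequently_eq_zero_of_nonneg {f f' : ℝ → ℝ} {f'' : ℝ} (hnn : ∀ s, 0 ≤ f s)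
    (hf : ∀ s ∈ Ici (0 : ℝ), HasDerivWithinAt f (f' s) (Ici 0) s)
    (hf' : HasDerivWithinAt f' f'' (Ici 0) 0) (hz : ∃ᶠ s in 𝓝[>] 0, f s = 0) : f'' = 0 := by
  have hz' : ∃ᶠ s in 𝓝[>] 0, f s = 0 ∧ 0 < s := hz.and_eventually self_mem_nhdsWithin
  have hf'z : ∀ s, f s = 0 → 0 < s → f' s = 0 := fun s hfs hs =>
    IsLocalMin.hasDerivAt_eq_zero (Eventually.of_forall fun x => hfs ▸ hnn x)
      ((hf s hs.le).hasDerivAt (Ici_mem_nhds hs))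
  have hf₀ : f 0 = 0 :=
    tendsto_nhds_unique_of_frequently_eq
      ((hf 0 self_mem_Ici).continuousWithinAt.tendsto.mono_left
        (nhdsWithin_mono _ Ioi_subset_Ici_self)) tendsto_const_nhds hz
  have hf'₀ : f' 0 = 0 :=
    tendsto_nhds_unique_of_frequently_eq (hf 0 self_mem_Ici).tendsto_slope_nhdsGT
      tendsto_const_nhds (hz.mono fun s hs => by simp [slope_def_field, hs, hf₀])
  exact tendsto_nhds_unique_of_frequently_eq hf'.tendsto_slope_nhdsGT tendsto_const_nhds
    (hz'.mono fun s hs => by simp [slope_def_field, hf'z s hs.1 hs.2, hf'₀])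

theorem convex_combo_add_smul {E : Type*} [AddCommGroup E] [Module ℝ E] {K L : Set E}
    (hK : Convex ℝ K) (hL : Convex ℝ L) {θ s t : ℝ} (hθ₀ : 0 ≤ θ) (hθ₁ : θ ≤ 1)
    (hs : 0 ≤ s) (ht : 0 ≤ t) :
    (1 - θ) • (K + s • L) + θ • (K + t • L) = K + ((1 - θ) * s + θ * t) • L := by
  rw [smul_add, smul_add, smul_smul, smul_smul, add_add_add_comm,
    ← hK.add_smul (by linarith) hθ₀, sub_add_cancel, one_smul,
    ← hL.add_smul (mul_nonneg (by linarith) hs) (mul_nonneg hθ₀ ht)]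

theorem Ioc_zero_measure_toReal_subset {α : Type*} [MeasurableSpace α] (μ : Measure α)
    (A : Set α) : Ioc 0 (μ A).toReal ⊆ {x : ℝ | 0 < x ∧ ENNReal.ofReal x ≤ μ univ} :=
  fun _ hx => ⟨hx.1, (ENNReal.ofReal_le_ofReal hx.2).trans
    (ENNReal.ofReal_toReal_le.trans (measure_mono (subset_univ A)))⟩

namespace IsFConcave

variable {n : ℕ} {μ : Measure (EuclideanSpace ℝ (Fin n))} {F : ℝ → ℝ}
  {𝒞 : Set (Set (EuclideanSpace ℝ (Fin n)))}

theorem neg (hF : IsFConcave μ F 𝒞) : IsFConcave μ (fun x => -F x) 𝒞 :=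
  ⟨hF.1.neg, hF.2.1.symm.imp (fun h _ ha _ hb hab => neg_lt_neg (h ha hb hab))
      (fun h _ ha _ hb hab => neg_lt_neg (h ha hb hab)),
    fun A hA B hB t ht hA₀ hB₀ hA' hB' y hy hyμ hFy =>
      hF.2.2 A hA B hB t ht hA₀ hB₀ hA' hB' y hy hyμ (by linarith)⟩

theorem combo_le (hF : IsFConcave μ F 𝒞)
    (hmono : StrictMonoOn F {x : ℝ | 0 < x ∧ ENNReal.ofReal x ≤ μ univ})
    {A B : Set (EuclideanSpace ℝ (Fin n))} (hA : A ∈ 𝒞) (hB : B ∈ 𝒞)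
    (hA₀ : 0 < (μ A).toReal) (hB₀ : 0 < (μ B).toReal) {t : ℝ} (ht : t ∈ Icc (0 : ℝ) 1) :
    (1 - t) * F (μ A).toReal + t * F (μ B).toReal ≤ F (μ ((1 - t) • A + t • B)).toReal := by
  have hsub : uIcc (μ A).toReal (μ B).toReal ⊆ {x : ℝ | 0 < x ∧ ENNReal.ofReal x ≤ μ univ} := by
    rcases le_total (μ A).toReal (μ B).toReal with h | h
    · rw [uIcc_of_le h]
      exact fun x hx => Ioc_zero_measure_toReal_subset μ B ⟨hA₀.trans_le hx.1, hx.2⟩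
    · rw [uIcc_of_ge h]
      exact fun x hx => Ioc_zero_measure_toReal_subset μ A ⟨hB₀.trans_le hx.1, hx.2⟩
  have hcombo : (1 - t) * F (μ A).toReal + t * F (μ B).toReal ∈
      uIcc (F (μ A).toReal) (F (μ B).toReal) :=
    convex_uIcc _ _ left_mem_uIcc right_mem_uIcc (sub_nonneg.2 ht.2) ht.1 (by ring)
  obtain ⟨y, hy, hFy⟩ := intermediate_value_uIcc (hF.1.mono hsub) hcombo
  have hyle : y ≤ (μ ((1 - t) • A + t • B)).toReal :=
    hF.2.2 A hA B hB t ht (ENNReal.toReal_pos_iff.mp hA₀).1 (ENNReal.toReal_pos_iff.mp hB₀).1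
      (ENNReal.toReal_pos_iff.mp hA₀).2.ne (ENNReal.toReal_pos_iff.mp hB₀).2.ne y
      (hsub hy).1 (hsub hy).2 hFy
  rw [← hFy]
  exact hmono.monotoneOn (hsub hy)
    (Ioc_zero_measure_toReal_subset μ _ ⟨(hsub hy).1.trans_le hyle, le_rfl⟩) hyle

theorem concaveOn_add_smul (hF : IsFConcave μ F 𝒞)
    (hmono : StrictMonoOn F {x : ℝ | 0 < x ∧ ENNReal.ofReal x ≤ μ univ})
    (hconv : ∀ A ∈ 𝒞, Convex ℝ A) (hclass : IsMinkowskiClass 𝒞)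
    {K L : Set (EuclideanSpace ℝ (Fin n))} (hK : K ∈ 𝒞) (hL : L ∈ 𝒞) {S : Set ℝ}
    (hS : Convex ℝ S) (hS₀ : S ⊆ Ici 0) (hpos : ∀ s ∈ S, 0 < (μ (K + s • L)).toReal) :
    ConcaveOn ℝ S (fun s => F (μ (K + s • L)).toReal) := by
  have hmem : ∀ s : ℝ, 0 ≤ s → K + s • L ∈ 𝒞 := fun s hs => by
    simpa using hclass K hK L hL 1 s zero_le_one hs
  refine ⟨hS, fun s hs t ht a b ha hb hab => ?_⟩
  obtain rfl : a = 1 - b := by linarith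
  have := hF.combo_le hmono (hmem s (hS₀ hs)) (hmem t (hS₀ ht)) (hpos s hs) (hpos t ht)
    ⟨hb, by linarith⟩
  rwa [convex_combo_add_smul (hconv K hK) (hconv L hL) hb (by linarith) (hS₀ hs) (hS₀ ht)]
    at this

end IsFConcave

theorem HasMixedMeasure.eq_of_hasDerivWithinAt {n : ℕ} {μ : Measure (EuclideanSpace ℝ (Fin n))}
    {K L : Set (EuclideanSpace ℝ (Fin n))} {m d : ℝ} (hm : HasMixedMeasure μ K L m)
    (hL : L.Nonempty) (hd : HasDerivWithinAt (fun s : ℝ => (μ (K + s • L)).toReal) d (Ici 0) 0) :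
    d = m :=
  tendsto_nhds_unique hd.tendsto_slope_nhdsGT
    (hm.congr fun ε => by simp [slope_def_field, zero_smul_set hL])

theorem IsFConcave.mixedMeasureSecond_le_of_strictMonoOn {n : ℕ}
    {μ : Measure (EuclideanSpace ℝ (Fin n))} {F : ℝ → ℝ}
    {𝒞 : Set (Set (EuclideanSpace ℝ (Fin n)))} (hF : IsFConcave μ F 𝒞)
    (hmono : StrictMonoOn F {x : ℝ | 0 < x ∧ ENNReal.ofReal x ≤ μ univ})
    (hconv : ∀ A ∈ 𝒞, Convex ℝ A) (hclass : IsMinkowskiClass 𝒞)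
    {K L : Set (EuclideanSpace ℝ (Fin n))} (hK : K ∈ 𝒞) (hL : L ∈ 𝒞) {mKL mKLL : ℝ}
    (hKL : HasMixedMeasure μ K L mKL) (hKLL : HasMixedMeasureSecond μ K L mKLL)
    {F' : ℝ → ℝ} {F'' : ℝ} (hF' : ∀ᶠ x in 𝓝 (μ K).toReal, HasDerivAt F (F' x) x)
    (hF'' : HasDerivAt F' F'' (μ K).toReal) (hF'ne : F' (μ K).toReal ≠ 0) :
    mKLL ≤ -(F'' / F' (μ K).toReal) * mKL ^ 2 := by
  set f : ℝ → ℝ := fun s => (μ (K + s • L)).toReal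
  obtain ⟨f', hf, hf'⟩ := hKLL
  by_cases hzero : ∃ᶠ s in 𝓝[>] 0, f s = 0
  · rw [eq_zero_of_tendsto_div_of_frequently_eq_zero hKL hzero,
      eq_zero_of_frequently_eq_zero_of_nonneg (fun _ => ENNReal.toReal_nonneg) hf hf' hzero]
    simp
  have hpos : ∀ᶠ s in 𝓝[>] 0, 0 < f s :=
    (not_frequently.mp hzero).mono fun s hs => ENNReal.toReal_nonneg.lt_of_ne' hs
  have hLne : L.Nonempty := by
    obtain ⟨s, hs⟩ := hpos.exists
    by_contra hL
    simp [f, not_nonempty_iff_eq_empty.mp hL] at hs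
  have hf₀ : f 0 = (μ K).toReal := by simp [f, zero_smul_set hLne]
  have hF'near : ∀ᶠ s in 𝓝[>] 0, HasDerivAt F (F' (f s)) (f s) :=
    ((hf 0 self_mem_Ici).continuousWithinAt.tendsto.mono_left
      (nhdsWithin_mono _ Ioi_subset_Ici_self)).eventually (hf₀ ▸ hF')
  obtain ⟨δ, hδ, hδsub⟩ := mem_nhdsGT_iff_exists_Ioc_subset.mp (hpos.and hF'near)
  have hconc : ConcaveOn ℝ (Ioc 0 δ) (F ∘ f) :=
    hF.concaveOn_add_smul hmono hconv hclass hK hL (convex_Ioc 0 δ)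
      (Ioc_subset_Ioi_self.trans Ioi_subset_Ici_self) fun s hs => (hδsub hs).1
  have hsecond := hconc.comp_secondDeriv_nonpos hδ hf hf' (fun s hs => (hδsub hs).2) (hf₀ ▸ hF'')
  rw [hf₀, hKL.eq_of_hasDerivWithinAt hLne (hf 0 self_mem_Ici)] at hsecond
  -- `μ K` may be `0`, hence the interval `(0, max (μ K) (f δ)]` with `μ K` in its closure
  have hF'pos : 0 < F' (μ K).toReal := by
    have hq : 0 < max (μ K).toReal (f δ) := (hδsub ⟨hδ, le_rfl⟩).1.trans_le (le_max_right _ _)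
    have hsub : Ioc 0 (max (μ K).toReal (f δ)) ⊆ {x : ℝ | 0 < x ∧ ENNReal.ofReal x ≤ μ univ} := by
      rcases max_choice (μ K).toReal (f δ) with h | h <;> rw [h] <;>
        exact Ioc_zero_measure_toReal_subset μ _
    refine (hF'.self_of_nhds.hasDerivWithinAt.nonneg_of_monotoneOn ?_
      (hmono.monotoneOn.mono hsub)).lt_of_ne' hF'ne
    exact accPt_Ioc_of_mem_Icc hq ⟨ENNReal.toReal_nonneg, le_max_left _ _⟩
  calc mKLL ≤ -(F'' * mKL ^ 2) / F' (μ K).toReal := (le_div_iff₀ hF'pos).2 (by linarith)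
    _ = -(F'' / F' (μ K).toReal) * mKL ^ 2 := by ring

theorem minkowski_second_for_F_concave_measures_general {n : ℕ}
    (μ : Measure (EuclideanSpace ℝ (Fin n))) (F : ℝ → ℝ)
    (𝒞 : Set (Set (EuclideanSpace ℝ (Fin n))))
    (hconv : ∀ A ∈ 𝒞, Convex ℝ A)
    (hclass : IsMinkowskiClass 𝒞)
    (hF : IsFConcave μ F 𝒞)
    (K L : Set (EuclideanSpace ℝ (Fin n))) (hK : K ∈ 𝒞) (hL : L ∈ 𝒞)
    (mKL mKLL : ℝ)
    (hKL : HasMixedMeasure μ K L mKL) (hKLL : HasMixedMeasureSecond μ K L mKLL)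
    (F' : ℝ → ℝ) (F'' : ℝ)
    (hF' : ∀ᶠ x in 𝓝 (μ K).toReal, HasDerivAt F (F' x) x)
    (hF'' : HasDerivAt F' F'' (μ K).toReal)
    (hF'ne : F' (μ K).toReal ≠ 0) :
    mKLL ≤ -(F'' / F' (μ K).toReal) * mKL ^ 2 := by
  rcases hF.2.1 with hmono | hanti
  · exact hF.mixedMeasureSecond_le_of_strictMonoOn hmono hconv hclass hK hL hKL hKLL hF' hF''
      hF'ne
  · have := hF.neg.mixedMeasureSecond_le_of_strictMonoOn (fun a ha b hb hab => neg_lt_neg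
      (hanti ha hb hab)) hconv hclass hK hL hKL hKLL (hF'.mono fun x hx => hx.neg) hF''.neg
      (neg_ne_zero.mpr hF'ne)
    simpa [neg_div_neg_eq] using this

/-- Minkowski's second inequality for `F`-concave measures:
`−(F″(μ(K))/F′(μ(K)))·μ(K;L)² ≥ μ(K;L,L)`. -/
theorem minkowski_second_for_F_concave_measures {n : ℕ}
    (μ : Measure (EuclideanSpace ℝ (Fin n))) (F : ℝ → ℝ)
    (𝒞 : Set (Set (EuclideanSpace ℝ (Fin n))))
    (hconv : ∀ A ∈ 𝒞, Convex ℝ A)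
    (hclass : IsMinkowskiClass 𝒞)
    (hF : IsFConcave μ F 𝒞)
    (hex : ∀ K ∈ 𝒞, ∀ L ∈ 𝒞,
      (∃ m, HasMixedMeasure μ K L m) ∧ (∃ m, HasMixedMeasure μ K K m) ∧
      (∃ m, HasMixedMeasureSecond μ K L m))
    (K L : Set (EuclideanSpace ℝ (Fin n))) (hK : K ∈ 𝒞) (hL : L ∈ 𝒞)
    (hKfin : μ K ≠ ⊤)
    (mKL mKLL : ℝ)
    (hKL : HasMixedMeasure μ K L mKL) (hKLL : HasMixedMeasureSecond μ K L mKLL)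
    (F' : ℝ → ℝ) (F'' : ℝ)
    (hF' : ∀ᶠ x in 𝓝 (μ K).toReal, HasDerivAt F (F' x) x)
    (hF'' : HasDerivAt F' F'' (μ K).toReal)
    (hF'ne : F' (μ K).toReal ≠ 0) :
    mKLL ≤ -(F'' / F' (μ K).toReal) * mKL ^ 2 :=
  minkowski_second_for_F_concave_measures_general μ F 𝒞 hconv hclass hF K L hK hL mKL mKLL hKL hKLL
    F' F'' hF' hF'' hF'ne
end
end

section
/- Let n ≥ 1 and let μ be a Radon measure on ℝ^n such that μ(A+B+C) + μ(A) ≥ μ(A+B) + μ(A+C) for all convex bodies A, B, C in ℝ^n. Then μ is a constant multiple of the Lebesgue measure: there exists c ≥ 0 with μ = c·Vol_n. -/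
open MeasureTheory Set Filter Topology Pointwise Metric

noncomputable section

/-- A convex body in `ℝⁿ`: a compact convex set with nonempty interior. -/
def IsConvexBody {n : ℕ} (K : Set (EuclideanSpace ℝ (Fin n))) : Prop :=
  Convex ℝ K ∧ IsCompact K ∧ (interior K).Nonempty

namespace SupermodularAux

variable {n : ℕ}

lemma isConvexBody_closedBall (x : EuclideanSpace ℝ (Fin n)) {δ : ℝ} (hδ : 0 < δ) :
    IsConvexBody (closedBall x δ) :=
  ⟨convex_closedBall x δ, isCompact_closedBall x δ,
    ⟨x, ball_subset_interior_closedBall (mem_ball_self hδ)⟩⟩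

lemma isConvexBody_add_singleton {A : Set (EuclideanSpace ℝ (Fin n))} (hA : IsConvexBody A)
    (t : EuclideanSpace ℝ (Fin n)) : IsConvexBody (A + {t}) := by
  obtain ⟨hconv, hcomp, x, hx⟩ := hA
  refine ⟨hconv.add (convex_singleton t), hcomp.add isCompact_singleton, ⟨x + t, ?_⟩⟩
  have hsub : interior A + {t} ⊆ interior (A + {t}) :=
    interior_maximal (Set.add_subset_add_right interior_subset) (isOpen_interior.add_right)
  exact hsub (Set.add_mem_add hx rfl)

/-- The pointed supermodularity inequality, by letting the balls shrink to points. -/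
lemma key (μ : Measure (EuclideanSpace ℝ (Fin n))) [IsLocallyFiniteMeasure μ]
    (hsup : ∀ A B C : Set (EuclideanSpace ℝ (Fin n)),
      IsConvexBody A → IsConvexBody B → IsConvexBody C →
      μ (A + B) + μ (A + C) ≤ μ (A + B + C) + μ A)
    {A : Set (EuclideanSpace ℝ (Fin n))} (hA : IsConvexBody A)
    (b c : EuclideanSpace ℝ (Fin n)) :
    μ (A + {b}) + μ (A + {c}) ≤ μ (A + {b + c}) + μ A := by
  set s : Set (EuclideanSpace ℝ (Fin n)) := A + {b + c} with hs
  have hscomp : IsCompact s := hA.2.1.add isCompact_singleton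
  have hfin : ∃ R, 0 < R ∧ μ (cthickening R s) ≠ ⊤ := by
    refine ⟨1, one_pos, ?_⟩
    rw [← hscomp.add_closedBall_zero zero_le_one]
    exact (hscomp.add (isCompact_closedBall 0 1)).measure_lt_top.ne
  have hlim := tendsto_measure_cthickening_of_isClosed
    (by simpa using hfin) hscomp.isClosed
  have htwo : Tendsto (fun δ : ℝ => δ + δ) (𝓝[>] (0:ℝ)) (𝓝 0) := by
    have h0 : Tendsto (fun δ : ℝ => δ + δ) (𝓝 (0:ℝ)) (𝓝 (0 + 0)) :=
      tendsto_id.add tendsto_id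
    simpa using h0.mono_left nhdsWithin_le_nhds
  have h2 : Tendsto (fun δ : ℝ => μ (cthickening (δ + δ) s) + μ A) (𝓝[>] (0:ℝ))
      (𝓝 (μ s + μ A)) := (hlim.comp htwo).add tendsto_const_nhds
  refine ge_of_tendsto h2 ?_
  filter_upwards [self_mem_nhdsWithin] with δ hδ
  have hδpos : (0:ℝ) < δ := hδ
  have hδ' : (0:ℝ) ≤ δ := hδpos.le
  have h1 := hsup A (closedBall b δ) (closedBall c δ) hA
    (isConvexBody_closedBall b hδpos) (isConvexBody_closedBall c hδpos)
  have e1 : A + closedBall b δ + closedBall c δ = cthickening (δ + δ) s := by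
    rw [add_assoc, closedBall_add_closedBall hδ' hδ', ← singleton_add_closedBall_zero,
      ← add_assoc, hscomp.add_closedBall_zero (by linarith)]
  have mono_b : μ (A + {b}) ≤ μ (A + closedBall b δ) :=
    measure_mono (Set.add_subset_add_left (singleton_subset_iff.mpr (mem_closedBall_self hδ')))
  have mono_c : μ (A + {c}) ≤ μ (A + closedBall c δ) :=
    measure_mono (Set.add_subset_add_left (singleton_subset_iff.mpr (mem_closedBall_self hδ')))
  calc μ (A + {b}) + μ (A + {c}) ≤ μ (A + closedBall b δ) + μ (A + closedBall c δ) :=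
        add_le_add mono_b mono_c
    _ ≤ μ (A + closedBall b δ + closedBall c δ) + μ A := h1
    _ = μ (cthickening (δ + δ) s) + μ A := by rw [e1]

/-- Translation invariance of `μ` on convex bodies. -/
lemma body_translate (μ : Measure (EuclideanSpace ℝ (Fin n))) [IsLocallyFiniteMeasure μ]
    (hsup : ∀ A B C : Set (EuclideanSpace ℝ (Fin n)),
      IsConvexBody A → IsConvexBody B → IsConvexBody C →
      μ (A + B) + μ (A + C) ≤ μ (A + B + C) + μ A)
    {A : Set (EuclideanSpace ℝ (Fin n))} (hA : IsConvexBody A)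
    (t : EuclideanSpace ℝ (Fin n)) : μ (A + {t}) = μ A := by
  classical
  set g : EuclideanSpace ℝ (Fin n) → ℝ := fun x => (μ (A + {x})).toReal with hg
  have hfin : ∀ x, μ (A + {x}) ≠ ⊤ := fun x =>
    ((hA.2.1.add isCompact_singleton).measure_lt_top).ne
  have hgnonneg : ∀ x, 0 ≤ g x := fun x => ENNReal.toReal_nonneg
  -- the supermodularity inequality for g
  have hsupg : ∀ a b c, g (a + b) + g (a + c) ≤ g (a + b + c) + g a := by
    intro a b c
    have h := key μ hsup (isConvexBody_add_singleton hA a) b c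
    rw [add_assoc A {a} {b}, add_assoc A {a} {c}, add_assoc A {a} {b + c},
      Set.singleton_add_singleton, Set.singleton_add_singleton,
      Set.singleton_add_singleton, ← add_assoc a b c] at h
    have h' := ENNReal.toReal_mono (ENNReal.add_ne_top.mpr ⟨hfin _, hfin _⟩) h
    rw [ENNReal.toReal_add (hfin _) (hfin _), ENNReal.toReal_add (hfin _) (hfin _)] at h'
    exact h'
  have h1 : ∀ x y, g x + g y ≤ g (x + y) + g 0 := by
    intro x y
    have := hsupg 0 x y
    simpa [zero_add] using this
  have h2 : ∀ x y, g (x + y) + g 0 ≤ g x + g y := by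
    intro x y
    set d : EuclideanSpace ℝ (Fin n) := (2⁻¹ : ℝ) • (y - x) with hd
    set m : EuclideanSpace ℝ (Fin n) := x + d with hm
    have hdm : m + d = y := by rw [hm, hd]; module
    have hconv : g m + g m ≤ g y + g x := by
      have := hsupg x d d
      rw [← hm] at this
      rw [show x + d + d = y by rw [← hm]; exact hdm] at this
      linarith [this]
    have hconc : g (x + y) + g 0 ≤ g m + g m := by
      have := hsupg m (x + y - m) (-m)
      have e1 : m + (x + y - m) = x + y := by module
      have e2 : m + -m = (0 : EuclideanSpace ℝ (Fin n)) := by module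
      have e3 : x + y + -m = m := by
        rw [hm, hd]; module
      rw [e1, e2, e3] at this
      linarith [this]
    linarith
  have h3 : ∀ x y, g (x + y) + g 0 = g x + g y := fun x y =>
    le_antisymm (h2 x y) (h1 x y)
  -- G is additive and bounded below, hence zero
  set G : EuclideanSpace ℝ (Fin n) → ℝ := fun x => g x - g 0 with hG
  have hGadd : ∀ x y, G (x + y) = G x + G y := by
    intro x y
    have := h3 x y
    simp only [hG]
    linarith
  have hG0 : G 0 = 0 := by simp [hG]
  have hGsmul : ∀ (k : ℕ) (x), G (k • x) = k * G x := by
    intro k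
    induction k with
    | zero => intro x; simpa using hG0
    | succ k ih =>
      intro x
      rw [succ_nsmul, hGadd, ih]
      push_cast
      ring
  have hGlb : ∀ x, -g 0 ≤ G x := fun x => by
    have := hgnonneg x
    simp only [hG]
    linarith
  have hGnonneg : ∀ x, 0 ≤ G x := by
    intro x
    by_contra hneg
    push_neg at hneg
    obtain ⟨k, hk⟩ := exists_nat_gt (g 0 / (-G x))
    have hGx : 0 < -G x := by linarith
    have h1' : g 0 < k * (-G x) := (div_lt_iff₀ hGx).mp hk
    have h2' : -g 0 ≤ (k : ℝ) * G x := by rw [← hGsmul k x]; exact hGlb _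
    nlinarith
  have hGzero : ∀ x, G x = 0 := by
    intro x
    have h1' := hGnonneg x
    have h2' := hGnonneg (-x)
    have h3' : G x + G (-x) = 0 := by rw [← hGadd]; simpa using hG0
    linarith
  have hgt : g t = g 0 := by
    have := hGzero t
    simp only [hG] at this
    linarith
  have hA0 : A + ({0} : Set (EuclideanSpace ℝ (Fin n))) = A := by simp
  have : (μ (A + {t})).toReal = (μ A).toReal := by
    have := hgt
    simpa [hg, hA0] using this
  exact (ENNReal.toReal_eq_toReal_iff' (hfin t) (by rw [← hA0]; exact hfin 0)).mp this

/-- Sandwiching a compact subset of a bounded convex open set between a convex body. -/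
lemma sandwich {U K : Set (EuclideanSpace ℝ (Fin n))} (hUo : IsOpen U) (hUc : Convex ℝ U)
    {x₀ : EuclideanSpace ℝ (Fin n)} {r : ℝ} (hr : 0 < r) (hball : closedBall x₀ r ⊆ U)
    (hKc : IsCompact K) (hKU : K ⊆ U) :
    ∃ K', IsConvexBody K' ∧ K ⊆ K' ∧ K' ⊆ U := by
  set S : Set (EuclideanSpace ℝ (Fin n)) := K ∪ closedBall x₀ r with hS
  have hScomp : IsCompact S := hKc.union (isCompact_closedBall _ _)
  have hSU : S ⊆ U := union_subset hKU hball
  obtain ⟨δ, δpos, hδ⟩ := hScomp.exists_cthickening_subset_open hUo hSU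
  set K' : Set (EuclideanSpace ℝ (Fin n)) := closure (convexHull ℝ S) with hK'
  have hSsubK' : S ⊆ K' := (subset_convexHull ℝ S).trans subset_closure
  have hK'U : K' ⊆ U := by
    calc closure (convexHull ℝ S) ⊆ thickening δ (convexHull ℝ S) :=
          closure_subset_thickening δpos _
      _ = convexHull ℝ S + ball 0 δ := (add_ball_zero δ (convexHull ℝ S)).symm
      _ = convexHull ℝ S + convexHull ℝ (ball 0 δ) := by
          rw [(convex_ball (0 : EuclideanSpace ℝ (Fin n)) δ).convexHull_eq]
      _ = convexHull ℝ (S + ball 0 δ) := (convexHull_add _ _).symm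
      _ ⊆ convexHull ℝ (cthickening δ S) := by
          apply convexHull_mono
          rw [add_ball_zero]
          exact thickening_subset_cthickening _ _
      _ ⊆ convexHull ℝ U := convexHull_mono hδ
      _ = U := hUc.convexHull_eq
  refine ⟨K', ⟨(convex_convexHull ℝ S).closure, ?_, ?_⟩, subset_union_left.trans hSsubK', hK'U⟩
  · exact Metric.isCompact_of_isClosed_isBounded isClosed_closure
      ((isBounded_convexHull.mpr hScomp.isBounded).closure)
  · have hb : ball x₀ r ⊆ interior K' :=
      interior_maximal ((ball_subset_closedBall.trans subset_union_right).trans hSsubK')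
        isOpen_ball
    exact ⟨x₀, hb (mem_ball_self hr)⟩

end SupermodularAux

open SupermodularAux in
/-- A Radon measure on `ℝⁿ`, `n ≥ 1`, that is supermodular over the class of all convex
bodies is a constant multiple of the Lebesgue measure. -/
theorem supermodular_radon_measure_is_multiple_of_lebesgue
    (n : ℕ) (hn : 1 ≤ n)
    (μ : Measure (EuclideanSpace ℝ (Fin n))) [IsLocallyFiniteMeasure μ] [μ.Regular]
    (hsup : ∀ A B C : Set (EuclideanSpace ℝ (Fin n)),
      IsConvexBody A → IsConvexBody B → IsConvexBody C →
      μ (A + B) + μ (A + C) ≤ μ (A + B + C) + μ A) :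
    ∃ c : NNReal, μ = c • (volume : Measure (EuclideanSpace ℝ (Fin n))) := by
  classical
  set E := EuclideanSpace ℝ (Fin n)
  -- the π-system of nonempty bounded convex open sets
  set C : Set (Set E) :=
    {U | IsOpen U ∧ Convex ℝ U ∧ Bornology.IsBounded U ∧ U.Nonempty} with hCdef
  have hCpi : IsPiSystem C := by
    rintro U ⟨hUo, hUc, hUb, -⟩ V ⟨hVo, hVc, hVb, -⟩ hne
    exact ⟨hUo.inter hVo, hUc.inter hVc, hUb.subset inter_subset_left, hne⟩
  have hgen : (inferInstance : MeasurableSpace E) = MeasurableSpace.generateFrom C := by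
    refine le_antisymm ?_ (MeasurableSpace.generateFrom_le ?_)
    · rw [BorelSpace.measurable_eq (α := E)]
      have hb : borel E = MeasurableSpace.generateFrom {s : Set E | IsOpen s} := rfl
      rw [hb]
      refine MeasurableSpace.generateFrom_le ?_
      intro U hU
      have hUopen : IsOpen U := hU
      have hx : ∀ x : U, ∃ ρ, 0 < ρ ∧ ball (x : E) ρ ⊆ U := by
        intro x
        obtain ⟨ρ, hρ, hsub⟩ := Metric.isOpen_iff.mp hUopen x x.2
        exact ⟨ρ, hρ, hsub⟩
      choose ρ hρ hρU using hx
      have hUeq : U = ⋃ x : U, ball (x : E) (ρ x) := by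
        apply Subset.antisymm
        · intro y hy
          exact mem_iUnion.mpr ⟨⟨y, hy⟩, mem_ball_self (hρ ⟨y, hy⟩)⟩
        · exact iUnion_subset fun x => hρU x
      obtain ⟨T, hTc, hTU⟩ := TopologicalSpace.isOpen_iUnion_countable
        (fun x : U => ball (x : E) (ρ x)) (fun _ => isOpen_ball)
      rw [hUeq, ← hTU]
      refine MeasurableSet.biUnion hTc fun i _ =>
        MeasurableSpace.measurableSet_generateFrom ?_
      exact ⟨isOpen_ball, convex_ball _ _, isBounded_ball, nonempty_ball.mpr (hρ i)⟩
    · rintro U ⟨hUo, -, -, -⟩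
      exact hUo.measurableSet
  -- translation invariance of μ
  have hmap : ∀ t : E, μ.map (fun x => t + x) = μ := by
    intro t
    have hmeas : Measurable (fun x : E => t + x) := measurable_const_add t
    set ν : Measure E := μ.map (fun x => t + x) with hν
    have hνreg : ν.Regular := by
      have heq : ν = μ.map (Homeomorph.addLeft t) := by
        rw [hν]; rfl
      rw [heq]
      exact Measure.Regular.map (Homeomorph.addLeft t)
    have hνK : ∀ K : Set E, IsConvexBody K → ν K = μ K := by
      intro K hK
      rw [hν, Measure.map_apply hmeas hK.2.1.isClosed.measurableSet]
      have hpre : (fun x : E => t + x) ⁻¹' K = K + {-t} := by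
        ext x
        simp only [mem_preimage, Set.mem_add, Set.mem_singleton_iff]
        constructor
        · intro hx; exact ⟨t + x, hx, -t, rfl, by abel⟩
        · rintro ⟨k, hk, y, rfl, rfl⟩; simpa [add_comm, add_assoc] using hk
      rw [hpre]
      exact body_translate μ hsup hK (-t)
    -- agreement on members of C
    have hCeq : ∀ U ∈ C, ν U = μ U := by
      rintro U ⟨hUo, hUc, hUb, x₀, hx₀⟩
      obtain ⟨r2, hr2, hballU⟩ := Metric.isOpen_iff.mp hUo x₀ hx₀
      have hball : closedBall x₀ (r2 / 2) ⊆ U :=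
        (closedBall_subset_ball (by linarith)).trans hballU
      have hr : (0 : ℝ) < r2 / 2 := by linarith
      have le1 : ν U ≤ μ U := by
        rw [hUo.measure_eq_iSup_isCompact ν]
        refine iSup_le fun K => iSup_le fun hKU => iSup_le fun hKc => ?_
        obtain ⟨K', hK', hKK', hK'U⟩ := sandwich hUo hUc hr hball hKc hKU
        calc ν K ≤ ν K' := measure_mono hKK'
          _ = μ K' := hνK K' hK'
          _ ≤ μ U := measure_mono hK'U
      have le2 : μ U ≤ ν U := by
        rw [hUo.measure_eq_iSup_isCompact μ]
        refine iSup_le fun K => iSup_le fun hKU => iSup_le fun hKc => ?_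
        obtain ⟨K', hK', hKK', hK'U⟩ := sandwich hUo hUc hr hball hKc hKU
        calc μ K ≤ μ K' := measure_mono hKK'
          _ = ν K' := (hνK K' hK').symm
          _ ≤ ν U := measure_mono hK'U
      exact le_antisymm le1 le2
    -- conclude by the π-system extension lemma
    refine MeasureTheory.Measure.ext_of_generateFrom_of_iUnion C
      (fun m : ℕ => ball (0 : E) (m + 1)) hgen hCpi ?_ ?_ ?_ hCeq
    · exact iUnion_ball_nat_succ 0
    · intro m
      exact ⟨isOpen_ball, convex_ball _ _, isBounded_ball,
        nonempty_ball.mpr (by positivity)⟩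
    · intro m
      have : ν (ball (0 : E) (m + 1)) ≤ ν (closedBall (0 : E) (m + 1)) :=
        measure_mono ball_subset_closedBall
      exact (this.trans_lt (isCompact_closedBall _ _).measure_lt_top).ne
  haveI : μ.IsAddLeftInvariant := ⟨hmap⟩
  exact ⟨Measure.addHaarScalarFactor μ volume,
    Measure.isAddLeftInvariant_eq_smul μ volume⟩
end
end

section
/- Let μ be a Radon measure on ℝ^n, n ≥ 1, with the following property: there exists a convex body K such that, for every x, y, z ∈ ℝ^n and every r ∈ (0,1), μ(rK+z) + μ(rK+z+x+y) ≥ μ(rK+z+x) + μ(rK+z+y) (where rK+z+x means the translate of the dilate rK by z+x). Then μ is a constant multiple of the Lebesgue measure. -/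
open MeasureTheory Set Filter Topology Pointwise

noncomputable section

/-!
For a fixed `r`, the function `f z = μ (r • K + {z})` is finite, and the inequality applied with
`(x, -x, z)` and with `(x, x, z - x)` turns it into a solution of Jensen's equation
`f (z + x) + f (z - x) = 2 f z`; being nonnegative, it is constant.

Integrating `μ (S ∩ (Q + {z}))` over `z` gives `μ S * vol Q`. With `Q = r • K` of constant
mass `c`, this yields `μ C * vol Q ≤ c * vol (C - Q)` for compact `C`, and
`c * vol (v + (C - Q)) ≤ μ (v + U) * vol Q` whenever `C - Q + Q ⊆ U`,
which holds for `U ⊇ C` open and `r` small. By regularity `μ` is translation invariant, hence a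
multiple of Lebesgue measure by the uniqueness of Haar measure.
-/

open scoped ENNReal

theorem AddMonoidHom.eq_zero_of_bddBelow_range {G : Type*} [AddGroup G] (f : G →+ ℝ)
    (hf : BddBelow (Set.range f)) : f = 0 := by
  obtain ⟨b, hb⟩ := hf
  have hnonneg : ∀ y, 0 ≤ f y := by
    intro y
    by_contra! hy
    obtain ⟨m, hm⟩ := exists_nat_gt (-b / -f y)
    have hbm : b ≤ m * f y := by simpa using hb (mem_range_self (m • y))
    rw [div_lt_iff₀ (neg_pos.mpr hy)] at hm
    linarith
  ext x
  simpa using le_antisymm (by linarith [hnonneg (-x), map_neg f x]) (hnonneg x)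

theorem eq_of_jensen_of_bddBelow {G : Type*} [AddCommGroup G] {g : G → ℝ}
    (hg : ∀ z x, g (z + x) + g (z - x) = 2 * g z) (hb : BddBelow (range g)) (z w : G) :
    g z = g w := by
  have hadd : ∀ a b, g (a + b) - g 0 = (g a - g 0) + (g b - g 0) := by
    intro a b
    have h₁ := hg a b
    have h₂ := hg b a
    have h₃ := hg 0 (a - b)
    rw [add_comm b a] at h₂
    rw [zero_add, zero_sub, neg_sub] at h₃
    linarith
  obtain ⟨b, hb⟩ := hb
  have hzero := (AddMonoidHom.mk' (fun x => g x - g 0) hadd).eq_zero_of_bddBelow_range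
    ⟨b - g 0, by rintro _ ⟨x, rfl⟩; simpa using hb (mem_range_self x)⟩
  have hconst : ∀ x, g x = g 0 := fun x => sub_eq_zero.mp (DFunLike.congr_fun hzero x)
  rw [hconst z, hconst w]

theorem apply_eq_of_supermodular_of_ne_top {G : Type*} [AddCommGroup G] {f : G → ℝ≥0∞}
    (hf : ∀ z, f z ≠ ∞) (hsup : ∀ x y z, f (z + x) + f (z + y) ≤ f z + f (z + x + y))
    (z w : G) : f z = f w := by
  have hjensen : ∀ z x, f (z + x) + f (z - x) = f z + f z := by
    intro z x
    refine le_antisymm ?_ ?_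
    · simpa [← sub_eq_add_neg] using hsup x (-x) z
    · simpa [add_comm (f (z - x))] using hsup x x (z - x)
  have hreal : ∀ z x, (f (z + x)).toReal + (f (z - x)).toReal = 2 * (f z).toReal := by
    intro z x
    rw [two_mul, ← ENNReal.toReal_add (hf _) (hf _), ← ENNReal.toReal_add (hf _) (hf _),
      hjensen]
  rw [← ENNReal.toReal_eq_toReal_iff' (hf z) (hf w)]
  exact eq_of_jensen_of_bddBelow (g := fun x => (f x).toReal) hreal
    ⟨0, by rintro _ ⟨x, rfl⟩; exact ENNReal.toReal_nonneg⟩ z w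

theorem Set.mem_add_singleton_iff_sub_mem {G : Type*} [AddGroup G] {Q : Set G} {x z : G} :
    x ∈ Q + {z} ↔ x - z ∈ Q := by
  simp [Set.add_singleton, sub_eq_add_neg]

section Translates

variable {G : Type*} [AddCommGroup G] [MeasurableSpace G] [MeasurableAdd₂ G] [MeasurableNeg G]
  {μ ν : Measure G} [SFinite μ] [SFinite ν] [ν.IsAddLeftInvariant] [ν.IsNegInvariant]
  {S Q : Set G}

theorem lintegral_measure_inter_add_singleton (hS : MeasurableSet S) (hQ : MeasurableSet Q) :
    ∫⁻ z, μ (S ∩ (Q + {z})) ∂ν = μ S * ν Q := by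
  set T : Set (G × G) := {p | p.1 ∈ S ∧ p.1 - p.2 ∈ Q}
  have hT : MeasurableSet T := (hS.preimage measurable_fst).inter
    (hQ.preimage (measurable_fst.sub measurable_snd))
  calc ∫⁻ z, μ (S ∩ (Q + {z})) ∂ν = μ.prod ν T := by
        rw [Measure.prod_apply_symm hT]
        congr! with z
        ext x
        simp [T, sub_eq_add_neg]
    _ = ∫⁻ x, S.indicator (fun _ => ν Q) x ∂μ := by
        rw [Measure.prod_apply hT]
        congr! with x
        by_cases hx : x ∈ S
        · have hslice : Prod.mk x ⁻¹' T = (fun t => x - t) ⁻¹' Q := by ext; simp [T, hx]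
          rw [indicator_of_mem hx, hslice, ← Measure.map_apply (measurable_const_sub x) hQ,
            Measure.map_sub_left_eq_self]
        · simp [T, hx]
    _ = μ S * ν Q := by rw [lintegral_indicator_const hS, mul_comm]


theorem measure_mul_le_mul_measure_sub (hS : MeasurableSet S) (hQ : MeasurableSet Q)
    {c : ℝ≥0∞} (hc : ∀ z, μ (Q + {z}) ≤ c) : μ S * ν Q ≤ c * ν (S - Q) := by
  rw [← lintegral_measure_inter_add_singleton hS hQ]
  refine (lintegral_mono fun z => ?_).trans (lintegral_indicator_const_le (S - Q) c)
  by_cases hz : z ∈ S - Q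
  · rw [indicator_of_mem hz]
    exact (measure_mono inter_subset_right).trans (hc z)
  · have hdisj : S ∩ (Q + {z}) = ∅ := by
      refine eq_empty_of_forall_notMem fun x ⟨hxS, hxQ⟩ => hz ?_
      simpa using sub_mem_sub hxS (mem_add_singleton_iff_sub_mem.mp hxQ)
    rw [hdisj, measure_empty]
    exact zero_le

theorem mul_measure_le_measure_mul {A V : Set G} (hA : MeasurableSet A) (hV : MeasurableSet V)
    (hQ : MeasurableSet Q) {c : ℝ≥0∞} (hc : ∀ z, c ≤ μ (Q + {z})) (hAV : A + Q ⊆ V) :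
    c * ν A ≤ μ V * ν Q := by
  rw [← lintegral_measure_inter_add_singleton hV hQ, ← lintegral_indicator_const hA]
  refine lintegral_mono fun z => ?_
  by_cases hz : z ∈ A
  · have hQV : Q + {z} ⊆ V := by
      rw [add_comm]
      exact (add_subset_add_right (singleton_subset_iff.mpr hz)).trans hAV
    rw [indicator_of_mem hz, inter_eq_self_of_subset_right hQV]
    exact hc z
  · simp [hz]

theorem measure_le_measure_preimage_add_left {C U : Set G} (hC : MeasurableSet C)
    (hU : MeasurableSet U) (hQ : MeasurableSet Q) (hCQ : MeasurableSet (C - Q))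
    (hQ₀ : ν Q ≠ 0) (hQ_top : ν Q ≠ ∞) {c : ℝ≥0∞} (hc : ∀ z, μ (Q + {z}) = c)
    (hCU : C - Q + Q ⊆ U) (v : G) : μ C ≤ μ ((v + ·) ⁻¹' U) := by
  have hA : MeasurableSet ((v + ·) ⁻¹' (C - Q)) := hCQ.preimage (measurable_const_add v)
  have hAU : (v + ·) ⁻¹' (C - Q) + Q ⊆ (v + ·) ⁻¹' U := by
    rintro _ ⟨a, ha, q, hq, rfl⟩
    simpa [add_assoc] using hCU (add_mem_add ha hq)
  rw [← ENNReal.mul_le_mul_iff_left hQ₀ hQ_top]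
  calc μ C * ν Q ≤ c * ν (C - Q) := measure_mul_le_mul_measure_sub hC hQ fun z => (hc z).le
    _ = c * ν ((v + ·) ⁻¹' (C - Q)) := by rw [measure_preimage_add]
    _ ≤ μ ((v + ·) ⁻¹' U) * ν Q :=
      mul_measure_le_measure_mul hA (hU.preimage (measurable_const_add v)) hQ
        (fun z => (hc z).ge) hAU

end Translates

theorem exists_sub_smul_add_smul_subset {E : Type*} [NormedAddCommGroup E] [NormedSpace ℝ E]
    {K C U : Set E} (hK : Bornology.IsBounded K) (hC : IsCompact C) (hU : IsOpen U)
    (hCU : C ⊆ U) : ∃ r ∈ Ioo (0 : ℝ) 1, C - r • K + r • K ⊆ U := by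
  obtain ⟨δ, hδ, hδU⟩ := hC.exists_thickening_subset_open hU hCU
  obtain ⟨R, hR, hKR⟩ := hK.exists_pos_norm_le
  set r := min (1 / 2) (δ / (4 * R))
  have hr : 0 < r := by positivity
  refine ⟨r, ⟨hr, by linarith [min_le_left (1 / 2 : ℝ) (δ / (4 * R))]⟩, ?_⟩
  rintro _ ⟨_, ⟨x, hx, _, ⟨k, hk, rfl⟩, rfl⟩, _, ⟨k', hk', rfl⟩, rfl⟩
  refine hδU (Metric.mem_thickening_iff.mpr ⟨x, hx, ?_⟩)
  have hrR : r * (2 * R) < δ := by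
    have := min_le_right (1 / 2 : ℝ) (δ / (4 * R))
    rw [le_div_iff₀ (by positivity)] at this
    linarith
  calc dist (x - r • k + r • k') x = r * ‖k' - k‖ := by
        rw [dist_eq_norm, sub_add_comm, add_sub_cancel_right, ← smul_sub, norm_smul,
          Real.norm_of_nonneg hr.le]
    _ ≤ r * (2 * R) := by
        gcongr
        linarith [norm_sub_le k' k, hKR k hk, hKR k' hk']
    _ < δ := hrR

section Homothets

variable {E : Type*} [NormedAddCommGroup E] [NormedSpace ℝ E] [MeasurableSpace E] [BorelSpace E]
  [FiniteDimensional ℝ E] {μ : Measure E} [IsLocallyFiniteMeasure μ] [μ.Regular] {K : Set E}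

theorem measure_le_measure_preimage_add_left_of_homothets (hK : IsCompact K)
    (hK_int : (interior K).Nonempty)
    (hconst : ∀ r ∈ Ioo (0 : ℝ) 1, ∀ z, μ (r • K + {z}) = μ (r • K + {0}))
    {U : Set E} (hU : IsOpen U) (v : E) : μ U ≤ μ ((v + ·) ⁻¹' U) := by
  rw [hU.measure_eq_iSup_isCompact μ]
  refine iSup₂_le fun C hCU => iSup_le fun hC => ?_
  obtain ⟨r, hr, hsub⟩ := exists_sub_smul_add_smul_subset hK.isBounded hC hU hCU
  have hrK : IsCompact (r • K) := hK.smul r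
  have hrK_int : (interior (r • K)).Nonempty := by
    rw [interior_smul₀ hr.1.ne']
    exact hK_int.smul_set
  refine measure_le_measure_preimage_add_left (ν := Measure.addHaar) hC.measurableSet
    hU.measurableSet hrK.measurableSet ?_ (Measure.measure_pos_of_nonempty_interior _ hrK_int).ne'
    hrK.measure_lt_top.ne (hconst r hr) hsub v
  rw [sub_eq_add_neg]
  exact (hC.add hrK.neg).measurableSet

theorem isAddLeftInvariant_of_homothets (hK : IsCompact K) (hK_int : (interior K).Nonempty)
    (hconst : ∀ r ∈ Ioo (0 : ℝ) 1, ∀ z, μ (r • K + {z}) = μ (r • K + {0})) :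
    μ.IsAddLeftInvariant := by
  refine ⟨fun v => ?_⟩
  have : (μ.map (v + ·)).Regular := Measure.Regular.map (Homeomorph.addLeft v)
  refine Measure.OuterRegular.ext_isOpen fun U hU => ?_
  rw [Measure.map_apply (measurable_const_add v) hU.measurableSet]
  refine le_antisymm ?_ (measure_le_measure_preimage_add_left_of_homothets hK hK_int hconst hU v)
  simpa [preimage_preimage] using measure_le_measure_preimage_add_left_of_homothets hK hK_int
    hconst (hU.preimage (continuous_const_add v)) (-v)

end Homothets

theorem supermodular_on_homothets_implies_lebesgue_general
    (n : ℕ)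
    (μ : Measure (EuclideanSpace ℝ (Fin n))) [IsLocallyFiniteMeasure μ] [μ.Regular]
    (K : Set (EuclideanSpace ℝ (Fin n))) (hK : IsConvexBody K)
    (hsup : ∀ x y z : EuclideanSpace ℝ (Fin n), ∀ r : ℝ, r ∈ Ioo (0:ℝ) 1 →
      μ (r • K + ({z + x} : Set (EuclideanSpace ℝ (Fin n))))
        + μ (r • K + ({z + y} : Set (EuclideanSpace ℝ (Fin n))))
      ≤ μ (r • K + ({z} : Set (EuclideanSpace ℝ (Fin n))))
        + μ (r • K + ({z + x + y} : Set (EuclideanSpace ℝ (Fin n))))) :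
    ∃ c : NNReal, μ = c • (volume : Measure (EuclideanSpace ℝ (Fin n))) := by
  obtain ⟨-, hK_compact, hK_int⟩ := hK
  have hconst : ∀ r ∈ Ioo (0 : ℝ) 1, ∀ z, μ (r • K + {z}) = μ (r • K + {0}) :=
    fun r hr z => apply_eq_of_supermodular_of_ne_top (f := fun z => μ (r • K + {z}))
      (fun z => ((hK_compact.smul r).add isCompact_singleton).measure_lt_top.ne)
      (fun x y z => hsup x y z r hr) z 0
  have := isAddLeftInvariant_of_homothets hK_compact hK_int hconst
  exact ⟨_, Measure.isAddLeftInvariant_eq_smul μ volume⟩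

/-- If a Radon measure `μ` on `ℝⁿ`, `n ≥ 1`, satisfies, for some convex body `K`,
`μ(rK+z) + μ(rK+z+x+y) ≥ μ(rK+z+x) + μ(rK+z+y)` for all `x, y, z ∈ ℝⁿ` and all
`r ∈ (0,1)`, then `μ` is a constant multiple of the Lebesgue measure. -/
theorem supermodular_on_homothets_implies_lebesgue
    (n : ℕ) (hn : 1 ≤ n)
    (μ : Measure (EuclideanSpace ℝ (Fin n))) [IsLocallyFiniteMeasure μ] [μ.Regular]
    (K : Set (EuclideanSpace ℝ (Fin n))) (hK : IsConvexBody K)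
    (hsup : ∀ x y z : EuclideanSpace ℝ (Fin n), ∀ r : ℝ, r ∈ Ioo (0:ℝ) 1 →
      μ (r • K + ({z + x} : Set (EuclideanSpace ℝ (Fin n))))
        + μ (r • K + ({z + y} : Set (EuclideanSpace ℝ (Fin n))))
      ≤ μ (r • K + ({z} : Set (EuclideanSpace ℝ (Fin n))))
        + μ (r • K + ({z + x + y} : Set (EuclideanSpace ℝ (Fin n))))) :
    ∃ c : NNReal, μ = c • (volume : Measure (EuclideanSpace ℝ (Fin n))) :=
  supermodular_on_homothets_implies_lebesgue_general n μ K hK hsup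
end
end

section
/- Let μ be a Borel measure on ℝ with continuous density φ (with respect to Lebesgue measure) such that for every compact closed interval K ⊂ ℝ and every compact closed interval L ⊂ ℝ containing 0, one has μ⁺(∂(K+L)) ≥ μ⁺(∂K). Then μ is a constant multiple of the Lebesgue measure (i.e. φ is constant). -/
open MeasureTheory Set Filter Topology Pointwise

noncomputable section

/-- The weighted surface area (outer Minkowski content) of `A ⊆ ℝ` with respect to `μ`:
`μ⁺(∂A) = liminf_{ε→0⁺} (μ(A + εB₂¹) − μ(A))/ε`, where `B₂¹` is the closed unit ball. -/
def weightedSurfaceArea1 (μ : Measure ℝ) (A : Set ℝ) : ℝ :=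
  Filter.liminf
    (fun ε : ℝ =>
      ((μ (A + ε • Metric.closedBall (0 : ℝ) 1)).toReal - (μ A).toReal) / ε)
    (𝓝[>] 0)

/-! For a continuous density `φ`, the fundamental theorem of calculus at both endpoints gives
`μ⁺(∂[a, b]) = φ a + φ b`. Taking for `K` the single point `{x}` and for `L` the interval between
`0` and `y - x`, the hypothesis reads `2 φ x ≤ φ x + φ y`, so `φ x ≤ φ y` for all `x` and `y`. -/

theorem Real.Icc_add_Icc {a b c d : ℝ} (hab : a ≤ b) (hcd : c ≤ d) :
    Icc a b + Icc c d = Icc (a + c) (b + d) := by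
  rw [Real.Icc_eq_closedBall a b, Real.Icc_eq_closedBall c d,
    closedBall_add_closedBall (by linarith) (by linarith), Real.Icc_eq_closedBall]
  congr 1 <;> ring

theorem Real.Icc_add_smul_unitClosedBall {a b ε : ℝ} (hab : a ≤ b) (hε : 0 ≤ ε) :
    Icc a b + ε • Metric.closedBall (0 : ℝ) 1 = Icc (a - ε) (b + ε) := by
  rw [smul_unitClosedBall, Real.norm_of_nonneg hε, Real.closedBall_zero_eq_Icc,
    Real.Icc_add_Icc hab (by linarith), sub_eq_add_neg]

theorem tendsto_widening_div_of_hasDerivAt {F : ℝ → ℝ} {a b fa fb : ℝ}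
    (ha : HasDerivAt F fa a) (hb : HasDerivAt F fb b) :
    Tendsto (fun ε => ((F (b + ε) - F (a - ε)) - (F b - F a)) / ε) (𝓝[>] 0)
      (𝓝 (fa + fb)) := by
  have hleft : HasDerivAt (fun t => F (a - t)) (-fa) 0 :=
    HasDerivAt.comp_const_sub a 0 (by rwa [sub_zero])
  have hslopes := hb.tendsto_slope_zero_right.sub hleft.tendsto_slope_zero_right
  rw [sub_neg_eq_add, add_comm] at hslopes
  refine hslopes.congr fun ε => ?_
  simp only [smul_eq_mul, zero_add, sub_zero]
  ring

theorem toReal_withDensity_ofReal_Icc {φ : ℝ → ℝ} (hφ : AEStronglyMeasurable φ)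
    (hφ0 : ∀ x, 0 ≤ φ x) {x y : ℝ} (hxy : x ≤ y) :
    ((volume.withDensity fun t => ENNReal.ofReal (φ t)) (Icc x y)).toReal
      = ∫ t in x..y, φ t := by
  rw [withDensity_apply _ measurableSet_Icc,
    ← integral_eq_lintegral_of_nonneg_ae (ae_of_all _ hφ0) hφ.restrict,
    integral_Icc_eq_integral_Ioc, intervalIntegral.integral_of_le hxy]

theorem weightedSurfaceArea1_withDensity_Icc {φ : ℝ → ℝ} (hφ : Continuous φ)
    (hφ0 : ∀ x, 0 ≤ φ x) {a b : ℝ} (hab : a ≤ b) :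
    weightedSurfaceArea1 (volume.withDensity fun x => ENNReal.ofReal (φ x)) (Icc a b)
      = φ a + φ b := by
  set F : ℝ → ℝ := fun x => ∫ t in (0 : ℝ)..x, φ t
  have hF : ∀ x, HasDerivAt F (φ x) x := fun x => (hφ.integral_hasStrictDerivAt 0 x).hasDerivAt
  have hμ : ∀ x y, x ≤ y →
      ((volume.withDensity fun x => ENNReal.ofReal (φ x)) (Icc x y)).toReal = F y - F x :=
    fun x y hxy => by
      rw [toReal_withDensity_ofReal_Icc hφ.aestronglyMeasurable hφ0 hxy,
        intervalIntegral.integral_interval_sub_left (hφ.intervalIntegrable _ _)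
          (hφ.intervalIntegrable _ _)]
  refine (Tendsto.congr' ?_ (tendsto_widening_div_of_hasDerivAt (hF a) (hF b))).liminf_eq
  filter_upwards [self_mem_nhdsWithin] with ε (hε : 0 < ε)
  rw [Real.Icc_add_smul_unitClosedBall hab hε.le, hμ _ _ (by linarith), hμ _ _ hab]

/-- If a Borel measure on `ℝ` with continuous density `φ` satisfies
`μ⁺(∂(K+L)) ≥ μ⁺(∂K)` for every compact interval `K` and every compact interval `L`
containing `0`, then `μ` is a constant multiple of the Lebesgue measure
(i.e. `φ` is constant). -/
theorem dimension_one_weak_supermodularity_implies_constant_density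
    (φ : ℝ → ℝ) (hφcont : Continuous φ) (hφnonneg : ∀ x, 0 ≤ φ x)
    (μ : Measure ℝ) (hμ : μ = volume.withDensity fun x => ENNReal.ofReal (φ x))
    (hsur : ∀ a b c d : ℝ, a ≤ b → c ≤ 0 → 0 ≤ d →
      weightedSurfaceArea1 μ (Icc a b) ≤ weightedSurfaceArea1 μ (Icc a b + Icc c d)) :
    ∃ C : ℝ, ∀ x, φ x = C := by
  subst hμ
  have hstep : ∀ x c d, c ≤ 0 → 0 ≤ d → φ x + φ x ≤ φ (x + c) + φ (x + d) := by
    intro x c d hc hd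
    have h := hsur x x c d le_rfl hc hd
    rwa [Real.Icc_add_Icc le_rfl (hc.trans hd),
      weightedSurfaceArea1_withDensity_Icc hφcont hφnonneg le_rfl,
      weightedSurfaceArea1_withDensity_Icc hφcont hφnonneg (by linarith)] at h
  have hle : ∀ x y, φ x ≤ φ y := by
    intro x y
    rcases le_total x y with hxy | hyx
    · have h := hstep x 0 (y - x) le_rfl (sub_nonneg.2 hxy)
      rw [add_zero, add_sub_cancel] at h
      linarith
    · have h := hstep x (y - x) 0 (sub_nonpos.2 hyx) le_rfl
      rw [add_zero, add_sub_cancel] at h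
      linarith
  exact ⟨φ 0, fun x => le_antisymm (hle x 0) (hle 0 x)⟩
end
end

section
/- Let n ≥ 1 and suppose μ is a rotationally invariant Borel measure on ℝ^n of the form dμ(x) = V(|x|)dx, where V : [0,∞) → [0,∞) is continuous. Then μ(aB₂ⁿ+bB₂ⁿ+cB₂ⁿ) + μ(aB₂ⁿ) ≥ μ(aB₂ⁿ+bB₂ⁿ) + μ(aB₂ⁿ+cB₂ⁿ) for all a, b, c ≥ 0 if and only if the function r ↦ V(r)·r^{n−1} is increasing on (0,∞); and μ(aB₂ⁿ+bB₂ⁿ+cB₂ⁿ) + μ(aB₂ⁿ) ≤ μ(aB₂ⁿ+bB₂ⁿ) + μ(aB₂ⁿ+cB₂ⁿ) for all a, b, c ≥ 0 if and only if r ↦ V(r)·r^{n−1} is decreasing on (0,∞). -/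
open MeasureTheory Set Filter Topology Pointwise Metric

/-!
In polar coordinates `μ (closedBall 0 R) = K * ∫ r in 0..R, g r` with `g r = V r * r ^ (n - 1)`
and `K = n * vol (ball 0 1) > 0`, and `a • B + b • B = (a + b) • B`. The supermodularity
inequality thus says `∫ r in a..a + b, g r ≤ ∫ r in a + c..a + b + c, g r`: integrals of `g`
over windows of a fixed length increase under translation to the right. This clearly holds for
monotone `g`; conversely, dividing by the window length `b` and letting `b → 0⁺` gives
`g a ≤ g (a + c)` by continuity. Submodularity is the same statement for `-g`.
-/

theorem ContinuousOn.intervalIntegrable_of_Ici {E : Type*} [NormedAddCommGroup E] {f : ℝ → E}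
    (hf : ContinuousOn f (Ici 0)) {a b : ℝ} (ha : 0 ≤ a) (hb : 0 ≤ b) :
    IntervalIntegrable f volume a b :=
  (hf.mono fun _ hx => (le_min ha hb).trans hx.1).intervalIntegrable

section IntegralShift

variable {g : ℝ → ℝ}

theorem integral_le_integral_add_of_monotoneOn (hg : ContinuousOn g (Ici 0))
    (hmono : MonotoneOn g (Ioi 0)) {a b c : ℝ} (ha : 0 ≤ a) (hb : 0 ≤ b) (hc : 0 ≤ c) :
    ∫ r in a..a + b, g r ≤ ∫ r in a + c..a + b + c, g r := by
  have hshift : ContinuousOn (fun r => g (r + c)) (Ici 0) :=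
    hg.comp (continuous_add_const c).continuousOn fun r (hr : 0 ≤ r) => by
      simp only [mem_Ici]; linarith
  rw [← intervalIntegral.integral_comp_add_right]
  refine intervalIntegral.integral_mono_on_of_le_Ioo (by linarith)
    (hg.intervalIntegrable_of_Ici ha (by linarith))
    (hshift.intervalIntegrable_of_Ici ha (by linarith)) fun r hr => ?_
  have hr0 : 0 < r := ha.trans_lt hr.1
  exact hmono hr0 (by simp only [mem_Ioi]; linarith) (by linarith)

theorem tendsto_inv_mul_integral_nhdsGT (hg : ContinuousOn g (Ici 0)) {x : ℝ} (hx : 0 < x) :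
    Tendsto (fun h => h⁻¹ * ∫ r in x..x + h, g r) (𝓝[>] 0) (𝓝 (g x)) := by
  have hderiv := intervalIntegral.integral_hasDerivAt_right
    (hg.intervalIntegrable_of_Ici hx.le hx.le)
    ((hg.mono Ioi_subset_Ici_self).stronglyMeasurableAtFilter isOpen_Ioi x hx)
    (hg.continuousAt (Ici_mem_nhds hx))
  simpa using hderiv.tendsto_slope_zero_right

theorem monotoneOn_of_integral_le_integral_add (hg : ContinuousOn g (Ici 0))
    (H : ∀ a b c : ℝ, 0 ≤ a → 0 ≤ b → 0 ≤ c →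
      ∫ r in a..a + b, g r ≤ ∫ r in a + c..a + b + c, g r) :
    MonotoneOn g (Ioi 0) := by
  intro x hx y hy hxy
  refine le_of_tendsto_of_tendsto (tendsto_inv_mul_integral_nhdsGT hg hx)
    (tendsto_inv_mul_integral_nhdsGT hg hy) ?_
  filter_upwards [self_mem_nhdsWithin] with h (hh : 0 < h)
  have := H x h (y - x) (le_of_lt hx) hh.le (sub_nonneg.2 hxy)
  rw [add_sub_cancel, add_right_comm, add_sub_cancel] at this
  gcongr

theorem monotoneOn_Ioi_iff_integral_le_integral_add (hg : ContinuousOn g (Ici 0)) :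
    MonotoneOn g (Ioi 0) ↔ ∀ a b c : ℝ, 0 ≤ a → 0 ≤ b → 0 ≤ c →
      ∫ r in a..a + b, g r ≤ ∫ r in a + c..a + b + c, g r :=
  ⟨fun hmono _ _ _ ha hb hc => integral_le_integral_add_of_monotoneOn hg hmono ha hb hc,
    monotoneOn_of_integral_le_integral_add hg⟩

theorem antitoneOn_Ioi_iff_integral_add_le_integral (hg : ContinuousOn g (Ici 0)) :
    AntitoneOn g (Ioi 0) ↔ ∀ a b c : ℝ, 0 ≤ a → 0 ≤ b → 0 ≤ c →
      ∫ r in a + c..a + b + c, g r ≤ ∫ r in a..a + b, g r := by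
  have hneg : AntitoneOn g (Ioi 0) ↔ MonotoneOn (-g) (Ioi 0) :=
    ⟨fun h _ hx _ hy hxy => neg_le_neg (h hx hy hxy),
      fun h _ hx _ hy hxy => neg_le_neg_iff.1 (h hx hy hxy)⟩
  rw [hneg, monotoneOn_Ioi_iff_integral_le_integral_add hg.neg]
  simp only [Pi.neg_apply, intervalIntegral.integral_neg, neg_le_neg_iff]

end IntegralShift

theorem withDensity_norm_closedBall_zero {E : Type*} [NormedAddCommGroup E] [NormedSpace ℝ E]
    [Nontrivial E] [FiniteDimensional ℝ E] [MeasurableSpace E] [BorelSpace E]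
    (μ : Measure E) [μ.IsAddHaarMeasure] {V : ℝ → ℝ} (hV : ContinuousOn V (Ici 0))
    (hV₀ : ∀ r, 0 ≤ r → 0 ≤ V r) {R : ℝ} (hR : 0 ≤ R) :
    μ.withDensity (fun x => ENNReal.ofReal (V ‖x‖)) (closedBall 0 R) =
      ENNReal.ofReal (Module.finrank ℝ E * μ.real (ball 0 1) *
        ∫ r in 0..R, V r * r ^ (Module.finrank ℝ E - 1)) := by
  have hint : IntegrableOn (fun x : E => V ‖x‖) (closedBall 0 R) μ :=
    (hV.comp continuous_norm.continuousOn fun x _ => norm_nonneg x).integrableOn_compact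
      (isCompact_closedBall 0 R)
  rw [withDensity_apply _ measurableSet_closedBall, ← ofReal_integral_eq_lintegral_ofReal hint
    (.of_forall fun x => hV₀ _ (norm_nonneg x)), ← integral_indicator measurableSet_closedBall]
  have hind : (closedBall (0 : E) R).indicator (fun x => V ‖x‖) =
      fun x => (Iic R).indicator V ‖x‖ := by
    ext x; simp [indicator]
  have hpow : (fun y : ℝ => y ^ (Module.finrank ℝ E - 1) • (Iic R).indicator V y) =
      (Iic R).indicator (fun r => V r * r ^ (Module.finrank ℝ E - 1)) := by
    ext y; simp [indicator, mul_comm]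
  rw [hind, integral_fun_norm_addHaar, hpow, setIntegral_indicator measurableSet_Iic,
    Ioi_inter_Iic, ← intervalIntegral.integral_of_le hR, nsmul_eq_mul, smul_eq_mul, mul_assoc]

/-- Supermodularity is the case `(p, q, s, t) = (a + b, a + c, a + b + c, a)`, submodularity the
case `(p, q, s, t) = (a + b + c, a, a + b, a + c)`. -/
theorem ofReal_mul_integral_add_le_iff {g : ℝ → ℝ} (hg : ContinuousOn g (Ici 0))
    (hg₀ : ∀ r, 0 ≤ r → 0 ≤ g r) {K : ℝ} (hK : 0 < K) {p q s t : ℝ}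
    (hp : 0 ≤ p) (hq : 0 ≤ q) (hs : 0 ≤ s) (ht : 0 ≤ t) :
    ENNReal.ofReal (K * ∫ r in 0..p, g r) + ENNReal.ofReal (K * ∫ r in 0..q, g r) ≤
        ENNReal.ofReal (K * ∫ r in 0..s, g r) + ENNReal.ofReal (K * ∫ r in 0..t, g r) ↔
      ∫ r in t..p, g r ≤ ∫ r in q..s, g r := by
  have hnonneg : ∀ R, 0 ≤ R → 0 ≤ K * ∫ r in 0..R, g r := fun R hR =>
    mul_nonneg hK.le (intervalIntegral.integral_nonneg hR fun r hr => hg₀ r hr.1)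
  have hint : ∀ R, 0 ≤ R → IntervalIntegrable g volume 0 R := fun R hR =>
    hg.intervalIntegrable_of_Ici le_rfl hR
  rw [← ENNReal.ofReal_add (hnonneg p hp) (hnonneg q hq),
    ← ENNReal.ofReal_add (hnonneg s hs) (hnonneg t ht),
    ENNReal.ofReal_le_ofReal_iff (add_nonneg (hnonneg s hs) (hnonneg t ht)),
    ← mul_add, ← mul_add, mul_le_mul_iff_right₀ hK,
    ← intervalIntegral.integral_interval_sub_left (hint p hp) (hint t ht),
    ← intervalIntegral.integral_interval_sub_left (hint s hs) (hint q hq), sub_le_sub_iff]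

/-- For a rotationally invariant measure `dμ(x) = V(|x|)dx` on `ℝⁿ`, supermodularity
along centered Euclidean balls is equivalent to `r ↦ V(r)r^{n−1}` being increasing on
`(0,∞)`, and submodularity is equivalent to `r ↦ V(r)r^{n−1}` being decreasing on
`(0,∞)`. -/
theorem ball_supermodularity_iff_monotone_density
    (n : ℕ) (hn : 1 ≤ n)
    (V : ℝ → ℝ) (hVcont : ContinuousOn V (Ici (0:ℝ)))
    (hVnonneg : ∀ r : ℝ, 0 ≤ r → 0 ≤ V r)
    (μ : Measure (EuclideanSpace ℝ (Fin n)))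
    (hμ : μ = volume.withDensity fun x : EuclideanSpace ℝ (Fin n) =>
      ENNReal.ofReal (V ‖x‖)) :
    ((∀ a b c : ℝ, 0 ≤ a → 0 ≤ b → 0 ≤ c →
        μ (a • Metric.closedBall (0 : EuclideanSpace ℝ (Fin n)) 1
            + b • Metric.closedBall (0 : EuclideanSpace ℝ (Fin n)) 1)
          + μ (a • Metric.closedBall (0 : EuclideanSpace ℝ (Fin n)) 1
            + c • Metric.closedBall (0 : EuclideanSpace ℝ (Fin n)) 1)
        ≤ μ (a • Metric.closedBall (0 : EuclideanSpace ℝ (Fin n)) 1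
            + b • Metric.closedBall (0 : EuclideanSpace ℝ (Fin n)) 1
            + c • Metric.closedBall (0 : EuclideanSpace ℝ (Fin n)) 1)
          + μ (a • Metric.closedBall (0 : EuclideanSpace ℝ (Fin n)) 1)) ↔
      MonotoneOn (fun r : ℝ => V r * r ^ (n - 1)) (Ioi (0:ℝ))) ∧
    ((∀ a b c : ℝ, 0 ≤ a → 0 ≤ b → 0 ≤ c →
        μ (a • Metric.closedBall (0 : EuclideanSpace ℝ (Fin n)) 1
            + b • Metric.closedBall (0 : EuclideanSpace ℝ (Fin n)) 1
            + c • Metric.closedBall (0 : EuclideanSpace ℝ (Fin n)) 1)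
          + μ (a • Metric.closedBall (0 : EuclideanSpace ℝ (Fin n)) 1)
        ≤ μ (a • Metric.closedBall (0 : EuclideanSpace ℝ (Fin n)) 1
            + b • Metric.closedBall (0 : EuclideanSpace ℝ (Fin n)) 1)
          + μ (a • Metric.closedBall (0 : EuclideanSpace ℝ (Fin n)) 1
            + c • Metric.closedBall (0 : EuclideanSpace ℝ (Fin n)) 1)) ↔
      AntitoneOn (fun r : ℝ => V r * r ^ (n - 1)) (Ioi (0:ℝ))) := by
  have : Nonempty (Fin n) := ⟨⟨0, hn⟩⟩
  have hg : ContinuousOn (fun r : ℝ => V r * r ^ (n - 1)) (Ici 0) :=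
    hVcont.mul (continuous_pow _).continuousOn
  have hg₀ : ∀ r : ℝ, 0 ≤ r → 0 ≤ V r * r ^ (n - 1) := fun r hr =>
    mul_nonneg (hVnonneg r hr) (pow_nonneg hr _)
  set K : ℝ := n * volume.real (ball (0 : EuclideanSpace ℝ (Fin n)) 1)
  have hK : 0 < K := mul_pos (by exact_mod_cast hn)
    (ENNReal.toReal_pos (measure_ball_pos _ _ one_pos).ne' measure_ball_lt_top.ne)
  have hball : ∀ R : ℝ, 0 ≤ R →
      μ (closedBall 0 R) = ENNReal.ofReal (K * ∫ r in 0..R, V r * r ^ (n - 1)) := fun R hR => by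
    rw [hμ, withDensity_norm_closedBall_zero volume hVcont hVnonneg hR, finrank_euclideanSpace_fin]
  rw [monotoneOn_Ioi_iff_integral_le_integral_add hg,
    antitoneOn_Ioi_iff_integral_add_le_integral hg]
  constructor <;> refine forall₃_congr fun a b c => imp_congr_right fun ha =>
    imp_congr_right fun hb => imp_congr_right fun hc => ?_ <;>
    simp (disch := positivity) only [smul_unitClosedBall_of_nonneg, closedBall_add_closedBall,
      add_zero, hball] <;>
    exact ofReal_mul_integral_add_le_iff hg hg₀ hK (by positivity) (by positivity)
      (by positivity) (by positivity)
end

section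
/- (Log-submodularity for dilated sets.) Let μ be a Borel measure on ℝ^n, n ≥ 1, that is log-concave on convex sets. Then for all convex sets A, B ⊆ ℝ^n and all t > 0, μ(A)·μ(A+B+tB) ≤ μ(A+B)·μ(A+tB). -/
open MeasureTheory Set Filter Topology Pointwise

noncomputable section

/-- `μ` is log-concave on convex sets:
`μ((1−λ)K + λL) ≥ μ(K)^{1−λ}·μ(L)^λ` for all convex `K, L` and `λ ∈ [0,1]`. -/
def IsLogConcaveOnConvexSets {n : ℕ} (μ : Measure (EuclideanSpace ℝ (Fin n))) : Prop :=
  ∀ K L : Set (EuclideanSpace ℝ (Fin n)), Convex ℝ K → Convex ℝ L →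
    ∀ lam ∈ Icc (0:ℝ) 1,
      μ K ^ (1 - lam) * μ L ^ lam ≤ μ ((1 - lam) • K + lam • L)

private lemma ennreal_mul_le_of_rpow {a b c d : ENNReal} {s : ℝ} (hs0 : 0 < s) (hs1 : s < 1)
    (h1 : a ^ (1 - s) * b ^ s ≤ c) (h2 : a ^ s * b ^ (1 - s) ≤ d) : a * b ≤ c * d := by
  rcases eq_or_ne a 0 with rfl | ha0
  · simp
  rcases eq_or_ne b 0 with rfl | hb0
  · simp
  have h1s : 0 < 1 - s := by linarith
  have pow_ne : ∀ (x : ENNReal) (y : ℝ), x ≠ 0 → 0 < y → x ^ y ≠ 0 := by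
    intro x y hx hy h
    rcases ENNReal.rpow_eq_zero_iff.mp h with ⟨h', _⟩ | ⟨_, h'⟩
    · exact hx h'
    · exact absurd h' (not_lt.mpr hy.le)
  rcases eq_or_ne a ⊤ with rfl | hat
  · have hc : c = ⊤ := by
      have : (⊤ : ENNReal) ^ (1 - s) * b ^ s = ⊤ := by
        rw [ENNReal.top_rpow_of_pos h1s, ENNReal.top_mul (pow_ne b s hb0 hs0)]
      exact top_le_iff.mp (this ▸ h1)
    have hd : d = ⊤ := by
      have : (⊤ : ENNReal) ^ s * b ^ (1 - s) = ⊤ := by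
        rw [ENNReal.top_rpow_of_pos hs0, ENNReal.top_mul (pow_ne b (1 - s) hb0 h1s)]
      exact top_le_iff.mp (this ▸ h2)
    simp [hc, hd]
  rcases eq_or_ne b ⊤ with rfl | hbt
  · have hc : c = ⊤ := by
      have : a ^ (1 - s) * (⊤ : ENNReal) ^ s = ⊤ := by
        rw [ENNReal.top_rpow_of_pos hs0, ENNReal.mul_top (pow_ne a (1 - s) ha0 h1s)]
      exact top_le_iff.mp (this ▸ h1)
    have hd : d = ⊤ := by
      have : a ^ s * (⊤ : ENNReal) ^ (1 - s) = ⊤ := by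
        rw [ENNReal.top_rpow_of_pos h1s, ENNReal.mul_top (pow_ne a s ha0 hs0)]
      exact top_le_iff.mp (this ▸ h2)
    simp [hc, hd]
  have key : a * b = (a ^ (1 - s) * b ^ s) * (a ^ s * b ^ (1 - s)) := by
    rw [mul_mul_mul_comm, ← ENNReal.rpow_add _ _ ha0 hat, ← ENNReal.rpow_add _ _ hb0 hbt]
    norm_num
  rw [key]
  exact mul_le_mul' h1 h2

/-- Log-submodularity for dilated sets: for a log-concave measure `μ`, convex sets
`A, B` and `t > 0`, `μ(A)·μ(A+B+tB) ≤ μ(A+B)·μ(A+tB)`. -/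
theorem log_submodularity_for_dilates {n : ℕ} (hn : 1 ≤ n)
    (μ : Measure (EuclideanSpace ℝ (Fin n)))
    (hμ : IsLogConcaveOnConvexSets μ)
    (A B : Set (EuclideanSpace ℝ (Fin n))) (hA : Convex ℝ A) (hB : Convex ℝ B)
    (t : ℝ) (ht : 0 < t) :
    μ A * μ (A + B + t • B) ≤ μ (A + B) * μ (A + t • B) := by
  set s : ℝ := 1 / (1 + t) with hs_def
  have h1t : (0:ℝ) < 1 + t := by linarith
  have hs0 : 0 < s := by positivity
  have hs1 : s < 1 := by
    rw [hs_def, div_lt_one h1t]; linarith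
  have hL : Convex ℝ (A + B + t • B) := ((hA.add hB).add (hB.smul t))
  have hmem : s ∈ Icc (0:ℝ) 1 := ⟨hs0.le, hs1.le⟩
  have hmem' : 1 - s ∈ Icc (0:ℝ) 1 := ⟨by linarith, by linarith⟩
  -- set identities
  have expand : ∀ lam : ℝ, 0 ≤ lam → lam ≤ 1 →
      (1 - lam) • A + lam • (A + B + t • B) = A + (lam + lam * t) • B := by
    intro lam h0 h1
    calc (1 - lam) • A + lam • (A + B + t • B)
        = ((1 - lam) • A + lam • A) + (lam • B + (lam * t) • B) := by
          rw [smul_add, smul_add, smul_smul]; abel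
      _ = A + (lam + lam * t) • B := by
          rw [← hA.add_smul (by linarith) h0, sub_add_cancel, one_smul,
            ← hB.add_smul h0 (by positivity)]
  have eq1 : (1 - s) • A + s • (A + B + t • B) = A + B := by
    rw [expand s hs0.le hs1.le]
    have : s + s * t = 1 := by rw [hs_def]; field_simp
    rw [this, one_smul]
  have eq2 : (1 - (1 - s)) • A + (1 - s) • (A + B + t • B) = A + t • B := by
    rw [expand (1 - s) (by linarith) (by linarith)]
    have : (1 - s) + (1 - s) * t = t := by rw [hs_def]; field_simp; ring
    rw [this]
  have h1 := hμ A (A + B + t • B) hA hL s hmem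
  have h2 := hμ A (A + B + t • B) hA hL (1 - s) hmem'
  rw [eq1] at h1
  rw [eq2, sub_sub_cancel] at h2
  exact ennreal_mul_le_of_rpow hs0 hs1 h1 h2
end
end

section
/- Let μ be a Borel measure on ℝ that is log-concave on convex sets. Then for every compact interval A ⊂ ℝ and all symmetric compact intervals B = [−b,b], C = [−c,c] (b, c ≥ 0), one has μ(A)·μ(A+B+C) ≤ μ(A+B)·μ(A+C). -/
open MeasureTheory Set Filter Topology Pointwise

noncomputable section

/-- `μ` is log-concave on convex sets of `ℝ`:
`μ((1−λ)K + λL) ≥ μ(K)^{1−λ}·μ(L)^λ` for all convex `K, L ⊆ ℝ` and `λ ∈ [0,1]`. -/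
def IsLogConcaveOnConvexSetsReal (μ : Measure ℝ) : Prop :=
  ∀ K L : Set ℝ, Convex ℝ K → Convex ℝ L →
    ∀ lam ∈ Icc (0:ℝ) 1,
      μ K ^ (1 - lam) * μ L ^ lam ≤ μ ((1 - lam) • K + lam • L)

/-!
With `B = b • D` and `C = c • D` for the convex set `D = [-1, 1]`, both `A + B` and `A + C` are
convex combinations of `A` and `A + B + C = A + (b + c) • D`, with complementary weights
`b / (b + c)` and `c / (b + c)`. Log-concavity bounds `μ (A + B)` and `μ (A + C)` below by the
corresponding weighted geometric means of `μ A` and `μ (A + B + C)`, and the product of these two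
means is exactly `μ A * μ (A + B + C)`.
-/

theorem ENNReal.rpow_one_sub_mul_rpow_mul_rpow_mul_rpow_one_sub (x y : ENNReal) {lam : ℝ}
    (h₀ : 0 ≤ lam) (h₁ : lam ≤ 1) :
    x ^ (1 - lam) * y ^ lam * (x ^ lam * y ^ (1 - lam)) = x * y := by
  rw [mul_mul_mul_comm, ← ENNReal.rpow_add_of_nonneg _ _ (sub_nonneg.2 h₁) h₀,
    ← ENNReal.rpow_add_of_nonneg _ _ h₀ (sub_nonneg.2 h₁), sub_add_cancel, add_sub_cancel,
    ENNReal.rpow_one, ENNReal.rpow_one]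

theorem Convex.one_sub_smul_add_smul_add_smul {𝕜 E : Type*} [Field 𝕜] [LinearOrder 𝕜]
    [IsStrictOrderedRing 𝕜] [AddCommGroup E] [Module 𝕜 E] {A : Set E} (hA : Convex 𝕜 A)
    (D : Set E) {lam : 𝕜} (h₀ : 0 ≤ lam) (h₁ : lam ≤ 1) (t : 𝕜) :
    (1 - lam) • A + lam • (A + t • D) = A + (lam * t) • D := by
  rw [smul_add, smul_smul, ← add_assoc, ← hA.add_smul (sub_nonneg.2 h₁) h₀, sub_add_cancel,
    one_smul]

theorem Set.Icc_neg_self_eq_smul {r : ℝ} (hr : 0 ≤ r) : Icc (-r) r = r • Icc (-1 : ℝ) 1 := by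
  rcases hr.eq_or_lt with rfl | hr
  · simp [zero_smul_set (nonempty_Icc.2 (by norm_num : (-1 : ℝ) ≤ 1)), singleton_zero]
  · simp [LinearOrderedField.smul_Icc hr]

namespace IsLogConcaveOnConvexSetsReal

variable {μ : Measure ℝ} {A D : Set ℝ}

theorem rpow_mul_rpow_le_add_smul (hμ : IsLogConcaveOnConvexSetsReal μ) (hA : Convex ℝ A)
    (hD : Convex ℝ D) (t : ℝ) {lam : ℝ} (h₀ : 0 ≤ lam) (h₁ : lam ≤ 1) :
    μ A ^ (1 - lam) * μ (A + t • D) ^ lam ≤ μ (A + (lam * t) • D) := by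
  rw [← hA.one_sub_smul_add_smul_add_smul D h₀ h₁]
  exact hμ A _ hA (hA.add (hD.smul t)) lam ⟨h₀, h₁⟩

theorem measure_mul_measure_add_smul_add_smul_le (hμ : IsLogConcaveOnConvexSetsReal μ)
    (hA : Convex ℝ A) (hD : Convex ℝ D) (hD₀ : D.Nonempty) {b c : ℝ} (hb : 0 ≤ b) (hc : 0 ≤ c) :
    μ A * μ (A + b • D + c • D) ≤ μ (A + b • D) * μ (A + c • D) := by
  rcases (add_nonneg hb hc).eq_or_lt with hbc | hbc
  · obtain ⟨rfl, rfl⟩ := (add_eq_zero_iff_of_nonneg hb hc).1 hbc.symm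
    simp [zero_smul_set hD₀]
  set lam := b / (b + c)
  have h₀ : 0 ≤ lam := by positivity
  have h₁ : lam ≤ 1 := div_le_one_of_le₀ (le_add_of_nonneg_right hc) hbc.le
  have hB : lam * (b + c) = b := div_mul_cancel₀ b hbc.ne'
  have hC : (1 - lam) * (b + c) = c := by rw [sub_mul, one_mul, hB, add_sub_cancel_left]
  have hB_le := hμ.rpow_mul_rpow_le_add_smul hA hD (b + c) h₀ h₁
  have hC_le := hμ.rpow_mul_rpow_le_add_smul hA hD (b + c) (sub_nonneg.2 h₁) (sub_le_self _ h₀)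
  rw [sub_sub_cancel, hC] at hC_le
  rw [hB] at hB_le
  calc μ A * μ (A + b • D + c • D) = μ A * μ (A + (b + c) • D) := by
        rw [add_assoc, hD.add_smul hb hc]
    _ = μ A ^ (1 - lam) * μ (A + (b + c) • D) ^ lam
          * (μ A ^ lam * μ (A + (b + c) • D) ^ (1 - lam)) :=
        (ENNReal.rpow_one_sub_mul_rpow_mul_rpow_mul_rpow_one_sub _ _ h₀ h₁).symm
    _ ≤ μ (A + b • D) * μ (A + c • D) := mul_le_mul' hB_le hC_le

end IsLogConcaveOnConvexSetsReal

theorem log_submodularity_on_line_for_symmetric_intervals_general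
    (μ : Measure ℝ) (hμ : IsLogConcaveOnConvexSetsReal μ)
    (a₁ a₂ : ℝ) (b c : ℝ) (hb : 0 ≤ b) (hc : 0 ≤ c) :
    μ (Icc a₁ a₂) * μ (Icc a₁ a₂ + Icc (-b) b + Icc (-c) c)
      ≤ μ (Icc a₁ a₂ + Icc (-b) b) * μ (Icc a₁ a₂ + Icc (-c) c) := by
  rw [Icc_neg_self_eq_smul hb, Icc_neg_self_eq_smul hc]
  exact hμ.measure_mul_measure_add_smul_add_smul_le (convex_Icc _ _) (convex_Icc _ _)
    (nonempty_Icc.2 (by norm_num)) hb hc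

/-- A log-concave measure on `ℝ` is log-submodular for a compact interval `A` and
symmetric compact intervals `B = [−b,b]`, `C = [−c,c]`:
`μ(A)·μ(A+B+C) ≤ μ(A+B)·μ(A+C)`. -/
theorem log_submodularity_on_line_for_symmetric_intervals
    (μ : Measure ℝ) (hμ : IsLogConcaveOnConvexSetsReal μ)
    (a₁ a₂ : ℝ) (ha : a₁ ≤ a₂) (b c : ℝ) (hb : 0 ≤ b) (hc : 0 ≤ c) :
    μ (Icc a₁ a₂) * μ (Icc a₁ a₂ + Icc (-b) b + Icc (-c) c)
      ≤ μ (Icc a₁ a₂ + Icc (-b) b) * μ (Icc a₁ a₂ + Icc (-c) c) :=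
  log_submodularity_on_line_for_symmetric_intervals_general μ hμ a₁ a₂ b c hb hc
end
end

section
/- Let a < b be real numbers and let h : [a,b] → ℝ be a nonnegative convex function that is differentiable on [a,b] with derivative h′. Then 2·((b−a)/2)² + h(a)² + h(b)² ≥ 2·∫_a^b h(x)·√(1 + h′(x)²) dx, with equality if and only if there exists α ∈ ℝ such that h(x) = αx + ((√(1+α²) − α)/2)·b − ((√(1+α²) + α)/2)·a for all x ∈ [a,b]. -/
/-!
Put `θ = arsinh ∘ h'`, so that `h' = sinh θ` and `√(1 + h'²) = cosh θ`. Convexity makes `θ`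
monotone, and a monotone derivative cannot jump (Darboux), so `θ` is also continuous.
With `E = ∫_a^· e^θ` and `F = ∫_a^· e^(-θ)`, one integration by parts gives
`2((b-a)/2)² + h(a)² + h(b)² - 2∫ h cosh θ = ((b-a)²/2 - ∫ e^(-θ) E) + (h(a) + h(b) - ∫ cosh θ)²/2`.
Monotonicity of `θ` gives `e^(-θ(x)) E(x) ≤ x - a`, so the first term is nonnegative; it vanishes
exactly when `θ` is constant, i.e. when `h` is affine, and the second term then fixes the intercept.
-/

open Set intervalIntegral MeasureTheory Real

theorem MonotoneOn.continuousOn_of_ordConnected_image {α β : Type*} [LinearOrder α]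
    [TopologicalSpace α] [OrderTopology α] [LinearOrder β] [TopologicalSpace β] [OrderTopology β]
    [DenselyOrdered β] {f : α → β} {s : Set α} [s.OrdConnected] (hf : MonotoneOn f s)
    (hfs : (f '' s).OrdConnected) : ContinuousOn f s := by
  let g : s → f '' s := fun x => ⟨f x, mem_image_of_mem f x.2⟩
  have hg : Continuous g :=
    Monotone.continuous_of_surjective (fun x y hxy => hf x.2 y.2 hxy)
      (by rintro ⟨_, x, hx, rfl⟩; exact ⟨⟨x, hx⟩, rfl⟩)
  exact continuousOn_iff_continuous_domRestrict.2 (continuous_subtype_val.comp hg)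

theorem ConvexOn.monotoneOn_of_hasDerivWithinAt {S : Set ℝ} {f f' : ℝ → ℝ}
    (hf : ConvexOn ℝ S f) (hf' : ∀ x ∈ S, HasDerivWithinAt f (f' x) S x) : MonotoneOn f' S := by
  intro x hx y hy hxy
  rcases hxy.eq_or_lt with rfl | hlt
  · rfl
  · exact (hf.le_slope_of_hasDerivWithinAt hx hy hlt (hf' x hx)).trans
      (hf.slope_le_of_hasDerivWithinAt hx hy hlt (hf' y hy))

theorem ConvexOn.continuousOn_deriv_of_hasDerivWithinAt {S : Set ℝ} [S.OrdConnected]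
    {f f' : ℝ → ℝ} (hf : ConvexOn ℝ S f) (hf' : ∀ x ∈ S, HasDerivWithinAt f (f' x) S x) :
    ContinuousOn f' S :=
  (hf.monotoneOn_of_hasDerivWithinAt hf').continuousOn_of_ordConnected_image
    (Set.OrdConnected.image_hasDerivWithinAt ‹_› hf')

theorem ContinuousOn.eqOn_zero_of_integral_eq_zero {f : ℝ → ℝ} {a b : ℝ} (hab : a < b)
    (hf : ContinuousOn f (Icc a b)) (hf₀ : ∀ x ∈ Icc a b, 0 ≤ f x)
    (hint : ∫ x in a..b, f x = 0) : EqOn f 0 (Icc a b) := by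
  have hae : f =ᵐ[volume.restrict (Ioc a b)] 0 :=
    (integral_eq_zero_iff_of_le_of_nonneg_ae hab.le
      ((ae_restrict_iff' measurableSet_Ioc).2
        (.of_forall fun x hx => hf₀ x (Ioc_subset_Icc_self hx)))
      (hf.intervalIntegrable_of_Icc hab.le)).1 hint
  rw [Measure.restrict_congr_set Ioc_ae_eq_Icc] at hae
  exact Measure.eqOn_Icc_of_ae_eq volume hab.ne hae hf continuousOn_const

theorem ContinuousOn.hasDerivAt_integral_of_mem_Ioo {f : ℝ → ℝ} {a b x : ℝ}
    (hf : ContinuousOn f (Icc a b)) (hx : x ∈ Ioo a b) :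
    HasDerivAt (fun u => ∫ y in a..u, f y) (f x) x :=
  integral_hasDerivAt_right
    ((hf.mono (Icc_subset_Icc le_rfl hx.2.le)).intervalIntegrable_of_Icc hx.1.le)
    ((hf.mono Ioo_subset_Icc_self).stronglyMeasurableAtFilter isOpen_Ioo x hx)
    (hf.continuousAt (Icc_mem_nhds hx.1 hx.2))

theorem IntervalIntegrable.continuousOn_primitive_Icc {f : ℝ → ℝ} {a b : ℝ} (hab : a ≤ b)
    (hf : IntervalIntegrable f volume a b) :
    ContinuousOn (fun u => ∫ y in a..u, f y) (Icc a b) := by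
  simpa only [uIcc_of_le hab] using continuousOn_primitive_interval' hf left_mem_uIcc

section

variable {a b : ℝ} {h θ : ℝ → ℝ}

theorem exp_neg_mul_integral_exp_le (hθ : MonotoneOn θ (Icc a b)) {x : ℝ} (hx : x ∈ Icc a b) :
    exp (-θ x) * ∫ y in a..x, exp (θ y) ≤ x - a := by
  have hmono : MonotoneOn (fun y => exp (θ y)) (Icc a x) :=
    exp_monotone.comp_monotoneOn (hθ.mono (Icc_subset_Icc le_rfl hx.2))
  have hle : ∫ y in a..x, exp (θ y) ≤ ∫ _ in a..x, exp (θ x) :=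
    integral_mono_on hx.1 (by rw [← uIcc_of_le hx.1] at hmono; exact hmono.intervalIntegrable)
      intervalIntegrable_const fun y hy => hmono hy (right_mem_Icc.2 hx.1) hy.2
  calc exp (-θ x) * ∫ y in a..x, exp (θ y) ≤ exp (-θ x) * ((x - a) * exp (θ x)) := by
        rw [intervalIntegral.integral_const, smul_eq_mul] at hle
        gcongr
    _ = x - a := by rw [exp_neg]; field_simp

theorem integral_exp_neg_mul_integral_exp_le (hab : a ≤ b) (hθ : MonotoneOn θ (Icc a b)) :
    ∫ x in a..b, exp (-θ x) * ∫ y in a..x, exp (θ y) ≤ (b - a) ^ 2 / 2 := by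
  have hθ' : MonotoneOn θ (uIcc a b) := by rwa [uIcc_of_le hab]
  have hexp : IntervalIntegrable (fun y => exp (θ y)) volume a b :=
    (exp_monotone.comp_monotoneOn hθ').intervalIntegrable
  have hint : IntervalIntegrable (fun x => exp (-θ x) * ∫ y in a..x, exp (θ y)) volume a b :=
    AntitoneOn.intervalIntegrable (fun x hx y hy hxy => exp_le_exp.2 (neg_le_neg (hθ' hx hy hxy)))
      |>.mul_continuousOn (by rw [uIcc_of_le hab]; exact hexp.continuousOn_primitive_Icc hab)
  calc _ ≤ ∫ x in a..b, (x - a) :=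
        integral_mono_on hab hint ((continuous_sub_right a).intervalIntegrable a b)
          fun x hx => exp_neg_mul_integral_exp_le hθ hx
    _ = (b - a) ^ 2 / 2 := by simp [integral_comp_sub_right fun x => x]

theorem integral_exp_neg_mul_integral_exp_eq_iff (hab : a < b) (hθ : MonotoneOn θ (Icc a b))
    (hθc : ContinuousOn θ (Icc a b)) :
    ∫ x in a..b, exp (-θ x) * ∫ y in a..x, exp (θ y) = (b - a) ^ 2 / 2 ↔
      ∀ x ∈ Icc a b, θ x = θ b := by
  have hexp : IntervalIntegrable (fun y => exp (θ y)) volume a b :=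
    hθc.rexp.intervalIntegrable_of_Icc hab.le
  constructor
  · intro heq
    have hprod : ContinuousOn (fun x => exp (-θ x) * ∫ y in a..x, exp (θ y)) (Icc a b) :=
      hθc.neg.rexp.mul (hexp.continuousOn_primitive_Icc hab.le)
    have hgc : ContinuousOn (fun x => (x - a) - exp (-θ x) * ∫ y in a..x, exp (θ y)) (Icc a b) :=
      (continuousOn_id.sub continuousOn_const).sub hprod
    have hgb := hgc.eqOn_zero_of_integral_eq_zero hab
      (fun x hx => sub_nonneg.2 (exp_neg_mul_integral_exp_le hθ hx))
      (by rw [integral_sub ((continuous_sub_right a).intervalIntegrable a b)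
            (hprod.intervalIntegrable_of_Icc hab.le), heq]
          simp [integral_comp_sub_right fun x => x])
      (right_mem_Icc.2 hab.le)
    have hk : ∫ y in a..b, (exp (θ b) - exp (θ y)) = 0 := by
      rw [integral_sub intervalIntegrable_const hexp, intervalIntegral.integral_const, smul_eq_mul]
      simp only [Pi.zero_apply, exp_neg] at hgb
      field_simp at hgb
      linarith
    intro x hx
    have := (continuousOn_const.sub hθc.rexp).eqOn_zero_of_integral_eq_zero hab
      (fun y hy => sub_nonneg.2 (exp_le_exp.2 (hθ hy (right_mem_Icc.2 hab.le) hy.2))) hk hx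
    exact exp_injective (sub_eq_zero.1 this).symm
  · intro hconst
    calc _ = ∫ x in a..b, (x - a) := integral_congr fun x hx => ?_
      _ = (b - a) ^ 2 / 2 := by simp [integral_comp_sub_right fun x => x]
    rw [uIcc_of_le hab.le] at hx
    have : ∫ y in a..x, exp (θ y) = ∫ _ in a..x, exp (θ b) := integral_congr fun y hy => by
      rw [uIcc_of_le hx.1] at hy
      rw [hconst y ⟨hy.1, hy.2.trans hx.2⟩]
    rw [this, hconst x hx, intervalIntegral.integral_const, smul_eq_mul, exp_neg]
    field_simp

theorem integral_exp_sub_integral_exp_neg (hab : a ≤ b) (hθc : ContinuousOn θ (Icc a b))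
    (hhc : ContinuousOn h (Icc a b)) (hh : ∀ x ∈ Ioo a b, HasDerivAt h (sinh (θ x)) x) :
    (∫ x in a..b, exp (θ x)) - ∫ x in a..b, exp (-θ x) = 2 * (h b - h a) := by
  have hexp : ContinuousOn (fun x => exp (θ x)) (Icc a b) := hθc.rexp
  have hexpneg : ContinuousOn (fun x => exp (-θ x)) (Icc a b) := hθc.neg.rexp
  rw [← integral_eq_sub_of_hasDerivAt_of_le hab hhc hh
      ((continuous_sinh.comp_continuousOn hθc).intervalIntegrable_of_Icc hab),
    ← intervalIntegral.integral_sub (hexp.intervalIntegrable_of_Icc hab)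
      (hexpneg.intervalIntegrable_of_Icc hab), ← intervalIntegral.integral_const_mul]
  simp only [sinh_eq]
  ring_nf

theorem integral_exp_neg_mul_integral_exp_eq (hab : a ≤ b) (hθc : ContinuousOn θ (Icc a b))
    (hhc : ContinuousOn h (Icc a b)) (hh : ∀ x ∈ Ioo a b, HasDerivAt h (sinh (θ x)) x) :
    ∫ x in a..b, exp (-θ x) * ∫ y in a..x, exp (θ y) =
      2 * (∫ x in a..b, h x * cosh (θ x))
        - h b * ((∫ x in a..b, exp (θ x)) + ∫ x in a..b, exp (-θ x))
        + ((∫ x in a..b, exp (θ x)) ^ 2 - (∫ x in a..b, exp (-θ x)) ^ 2) / 4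
        + (∫ x in a..b, exp (θ x)) * (∫ x in a..b, exp (-θ x)) / 2 := by
  have hexp : ContinuousOn (fun x => exp (θ x)) (Icc a b) := hθc.rexp
  have hexpneg : ContinuousOn (fun x => exp (-θ x)) (Icc a b) := hθc.neg.rexp
  set E := fun u => ∫ y in a..u, exp (θ y)
  set F := fun u => ∫ y in a..u, exp (-θ y)
  have hE : ContinuousOn E (Icc a b) :=
    (hexp.intervalIntegrable_of_Icc hab).continuousOn_primitive_Icc hab
  have hF : ContinuousOn F (Icc a b) :=
    (hexpneg.intervalIntegrable_of_Icc hab).continuousOn_primitive_Icc hab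
  -- the antiderivative comes from `2 h' = E' - F'` and `2 cosh θ = E' + F'`
  have hΛ : ∀ x ∈ Ioo a b,
      HasDerivAt (fun u => h u * (E u + F u) - (E u ^ 2 - F u ^ 2) / 4 - E u * F u / 2)
        (2 * (h x * cosh (θ x)) - exp (-θ x) * E x) x := by
    intro x hx
    have hE' := hexp.hasDerivAt_integral_of_mem_Ioo hx
    have hF' := hexpneg.hasDerivAt_integral_of_mem_Ioo hx
    refine ((((hh x hx).mul (hE'.add hF')).sub (((hE'.pow 2).sub (hF'.pow 2)).div_const 4)).sub
      ((hE'.mul hF').div_const 2)).congr_deriv ?_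
    simp only [E, Pi.add_apply, sinh_eq, cosh_eq]
    ring
  have hΛc : ContinuousOn
      (fun u => h u * (E u + F u) - (E u ^ 2 - F u ^ 2) / 4 - E u * F u / 2) (Icc a b) :=
    ((hhc.mul (hE.add hF)).sub (((hE.pow 2).sub (hF.pow 2)).div_const 4)).sub
      ((hE.mul hF).div_const 2)
  have hcosh : ContinuousOn (fun x => 2 * (h x * cosh (θ x))) (Icc a b) :=
    continuousOn_const.mul (hhc.mul (continuous_cosh.comp_continuousOn hθc))
  have hprod : ContinuousOn (fun x => exp (-θ x) * E x) (Icc a b) := hexpneg.mul hE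
  have hftc := integral_eq_sub_of_hasDerivAt_of_le hab hΛc hΛ
    ((hcosh.sub hprod).intervalIntegrable_of_Icc hab)
  rw [intervalIntegral.integral_sub (hcosh.intervalIntegrable_of_Icc hab)
    (hprod.intervalIntegrable_of_Icc hab), intervalIntegral.integral_const_mul] at hftc
  simp only [E, F, integral_same] at hftc
  linarith

theorem sub_two_mul_integral_mul_cosh_eq (hab : a ≤ b) (hθc : ContinuousOn θ (Icc a b))
    (hhc : ContinuousOn h (Icc a b)) (hh : ∀ x ∈ Ioo a b, HasDerivAt h (sinh (θ x)) x) :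
    2 * ((b - a) / 2) ^ 2 + h a ^ 2 + h b ^ 2 - 2 * ∫ x in a..b, h x * cosh (θ x) =
      ((b - a) ^ 2 / 2 - ∫ x in a..b, exp (-θ x) * ∫ y in a..x, exp (θ y))
        + (h a + h b - ∫ x in a..b, cosh (θ x)) ^ 2 / 2 := by
  have hexp : ContinuousOn (fun x => exp (θ x)) (Icc a b) := hθc.rexp
  have hexpneg : ContinuousOn (fun x => exp (-θ x)) (Icc a b) := hθc.neg.rexp
  have hsum :
      (∫ x in a..b, exp (θ x)) + ∫ x in a..b, exp (-θ x) = 2 * ∫ x in a..b, cosh (θ x) := by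
    rw [← intervalIntegral.integral_add (hexp.intervalIntegrable_of_Icc hab)
      (hexpneg.intervalIntegrable_of_Icc hab), ← intervalIntegral.integral_const_mul]
    simp only [cosh_eq]
    ring_nf
  have hdiff := integral_exp_sub_integral_exp_neg hab hθc hhc hh
  rw [integral_exp_neg_mul_integral_exp_eq hab hθc hhc hh,
    show h a = h b - ((∫ x in a..b, exp (θ x)) - ∫ x in a..b, exp (-θ x)) / 2 by linarith,
    show ∫ x in a..b, cosh (θ x) = ((∫ x in a..b, exp (θ x)) + ∫ x in a..b, exp (-θ x)) / 2 by
      linarith]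
  ring

theorem exists_affine_eq_iff {h' : ℝ → ℝ} (hab : a < b)
    (hh : ∀ x ∈ Icc a b, HasDerivWithinAt h (h' x) (Icc a b) x) :
    (∃ α : ℝ, ∀ x ∈ Icc a b,
        h x = α * x + (√(1 + α ^ 2) - α) / 2 * b - (√(1 + α ^ 2) + α) / 2 * a) ↔
      (∀ x ∈ Icc a b, h' x = h' b) ∧ h a + h b = ∫ x in a..b, √(1 + h' x ^ 2) := by
  have hb : b ∈ Icc a b := right_mem_Icc.2 hab.le
  have hlength : ∀ α, (∀ x ∈ Icc a b, h' x = α) →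
      ∫ x in a..b, √(1 + h' x ^ 2) = √(1 + α ^ 2) * (b - a) := fun α hα => by
    rw [integral_congr fun x hx => by rw [hα x (uIcc_of_le hab.le ▸ hx)],
      intervalIntegral.integral_const, smul_eq_mul, mul_comm]
  constructor
  · rintro ⟨α, hα⟩
    have hh' : ∀ x ∈ Icc a b, h' x = α := fun x hx => by
      set c := (√(1 + α ^ 2) - α) / 2 * b - (√(1 + α ^ 2) + α) / 2 * a
      have hline : HasDerivWithinAt (fun y => α * y + c) α (Icc a b) x := by
        simpa using ((hasDerivAt_id' x).const_mul α |>.add_const c).hasDerivWithinAt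
      refine (uniqueDiffOn_Icc hab x hx).eq_deriv _ (hh x hx) (hline.congr (fun y hy => ?_) ?_)
      · rw [hα y hy]; ring
      · rw [hα x hx]; ring
    refine ⟨fun x hx => (hh' x hx).trans (hh' b hb).symm, ?_⟩
    rw [hlength α hh', hα a (left_mem_Icc.2 hab.le), hα b hb]
    ring
  · rintro ⟨hconst, hsum⟩
    have haff : ∀ x ∈ Icc a b, h x = h' b * (x - a) + h a :=
      eq_of_has_deriv_right_eq
        (fun x hx => (hconst x (Ico_subset_Icc_self hx) ▸ hh x (Ico_subset_Icc_self hx))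
          |>.mono_of_mem_nhdsWithin (Icc_mem_nhdsGE_of_mem hx))
        (fun x _ => by
          simpa using (((hasDerivAt_id' x).sub_const a).const_mul (h' b)).add_const (h a)
            |>.hasDerivWithinAt)
        (fun x hx => (hh x hx).continuousWithinAt) (by fun_prop) (by simp)
    rw [hlength (h' b) hconst, haff b hb] at hsum
    exact ⟨h' b, fun x hx => by rw [haff x hx]; linear_combination hsum / 2⟩

end

theorem convex_function_arclength_inequality_general
    (a b : ℝ) (hab : a < b) (h h' : ℝ → ℝ)
    (hconv : ConvexOn ℝ (Icc a b) h)
    (hderiv : ∀ x ∈ Icc a b, HasDerivWithinAt h (h' x) (Icc a b) x) :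
    2 * (∫ x in a..b, h x * Real.sqrt (1 + h' x ^ 2))
      ≤ 2 * ((b - a) / 2) ^ 2 + h a ^ 2 + h b ^ 2 ∧
    (2 * (∫ x in a..b, h x * Real.sqrt (1 + h' x ^ 2))
        = 2 * ((b - a) / 2) ^ 2 + h a ^ 2 + h b ^ 2 ↔
      ∃ α : ℝ, ∀ x ∈ Icc a b,
        h x = α * x + (Real.sqrt (1 + α ^ 2) - α) / 2 * b
          - (Real.sqrt (1 + α ^ 2) + α) / 2 * a) := by
  set θ : ℝ → ℝ := fun x => arsinh (h' x)
  have hθ : MonotoneOn θ (Icc a b) :=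
    arsinh_strictMono.monotone.comp_monotoneOn (hconv.monotoneOn_of_hasDerivWithinAt hderiv)
  have hθc : ContinuousOn θ (Icc a b) :=
    continuous_arsinh.comp_continuousOn (hconv.continuousOn_deriv_of_hasDerivWithinAt hderiv)
  have hgap := sub_two_mul_integral_mul_cosh_eq hab.le hθc
    (fun x hx => (hderiv x hx).continuousWithinAt) fun x hx => by
      simpa [θ, sinh_arsinh] using
        (hderiv x (Ioo_subset_Icc_self hx)).hasDerivAt (Icc_mem_nhds hx.1 hx.2)
  have hdefect := integral_exp_neg_mul_integral_exp_le hab.le hθ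
  have hrigid := integral_exp_neg_mul_integral_exp_eq_iff hab hθ hθc
  simp only [θ, cosh_arsinh, arsinh_inj] at hgap hdefect hrigid
  have hsq := sq_nonneg (h a + h b - ∫ x in a..b, √(1 + h' x ^ 2))
  refine ⟨by linarith, ?_⟩
  rw [exists_affine_eq_iff hab hderiv, ← hrigid]
  constructor
  · intro heq
    constructor <;> nlinarith
  · rintro ⟨hdefect0, hsum⟩
    rw [hdefect0, hsum, sub_self] at hgap
    linarith

/-- For a nonnegative convex differentiable function `h` on `[a,b]`:
`2((b−a)/2)² + h(a)² + h(b)² ≥ 2∫_a^b h(x)√(1 + h′(x)²) dx`, with equality iff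
`h(x) = αx + ((√(1+α²) − α)/2)b − ((√(1+α²) + α)/2)a` for some `α ∈ ℝ`. -/
theorem convex_function_arclength_inequality
    (a b : ℝ) (hab : a < b) (h h' : ℝ → ℝ)
    (hconv : ConvexOn ℝ (Icc a b) h)
    (hnonneg : ∀ x ∈ Icc a b, 0 ≤ h x)
    (hderiv : ∀ x ∈ Icc a b, HasDerivWithinAt h (h' x) (Icc a b) x) :
    2 * (∫ x in a..b, h x * Real.sqrt (1 + h' x ^ 2))
      ≤ 2 * ((b - a) / 2) ^ 2 + h a ^ 2 + h b ^ 2 ∧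
    (2 * (∫ x in a..b, h x * Real.sqrt (1 + h' x ^ 2))
        = 2 * ((b - a) / 2) ^ 2 + h a ^ 2 + h b ^ 2 ↔
      ∃ α : ℝ, ∀ x ∈ Icc a b,
        h x = α * x + (Real.sqrt (1 + α ^ 2) - α) / 2 * b
          - (Real.sqrt (1 + α ^ 2) + α) / 2 * a) :=
  convex_function_arclength_inequality_general a b hab h h' hconv hderiv
end
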